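/- arXiv:1706.00313 — 9 statements merged into one kernel-verified Lean document; each statement's English description precedes it below -/
import Mathlib

section
/- Let w be the minimum of all the coordinates of r and s. If t ≥ 2g − 1 − q³·w, then the cardinality of Ω_{r,s,t} is #Ω_{r,s,t} = 1 − g + t + |r| + q·|s|, where |r| = Σ_{μ=0}^{q−1} r_μ and |s| = Σ_{ν=1}^{q²−1} s_ν. -/
/-!
For fixed `i` the box constraints force `j_μ = -⌊(i + r_μ)/m(q+1)⌋` and `k_ν = -⌊(i + s_ν)/m⌋`,
so `Ω` is in bijection with the integers `i ≥ -r₀` whose weight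
`F i = q³ i + m(q+1)|j| + mq|k|` is at most `t`. Writing the floors through remainders shows that
`F i - i` has period `M = m(q+1)` and lies between `-(|r| - r₀ + q|s|)` and
`2g - (|r| - r₀ + q|s|)`; by the hypothesis on `t`, every `i` in the period `[-r₀ - M, -r₀)` has
`F i ≤ t`. Counting residue class by residue class gives `#Ω = Σ ⌊(t - F i)/M⌋` over that period,
and the sum is evaluated with Hermite's identity `Σ_{j<d} ⌊(x + j)/d⌋ = x` and the floor sum
`Σ_{i<d} ⌊(x + c i)/d⌋` for `c` prime to `d`, applied with `c = -q³`, which is prime to `m`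
because `m(q+1) - q^n = 1`.
-/

/-- The lattice point set `Ω_{r,s,t}` associated with the GGS curve:
triples `(i, j, k)` with `i + r 0 ≥ 0`, `0 ≤ i + m(q+1) j_μ + r_μ < m(q+1)` for
`μ = 1, …, q-1`, `0 ≤ i + m k_ν + s_ν < m` for `ν = 1, …, q²-1`, and
`q³ i + m(q+1)|j| + m q |k| ≤ t`. -/
def OmegaSet (q : ℕ) (hq : 0 < q) (m : ℤ) (r : Fin q → ℤ) (s : Fin (q ^ 2 - 1) → ℤ)
    (t : ℤ) : Set (ℤ × (Fin (q - 1) → ℤ) × (Fin (q ^ 2 - 1) → ℤ)) :=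
  {p | 0 ≤ p.1 + r ⟨0, hq⟩ ∧
    (∀ μ : Fin (q - 1),
      0 ≤ p.1 + m * ((q : ℤ) + 1) * p.2.1 μ + r ⟨μ.val + 1, by have := μ.isLt; omega⟩ ∧
      p.1 + m * ((q : ℤ) + 1) * p.2.1 μ + r ⟨μ.val + 1, by have := μ.isLt; omega⟩
        < m * ((q : ℤ) + 1)) ∧
    (∀ ν : Fin (q ^ 2 - 1), 0 ≤ p.1 + m * p.2.2 ν + s ν ∧ p.1 + m * p.2.2 ν + s ν < m) ∧
    (q : ℤ) ^ 3 * p.1 + m * ((q : ℤ) + 1) * (∑ μ, p.2.1 μ)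
      + m * (q : ℤ) * (∑ ν, p.2.2 ν) ≤ t}

open Finset

namespace Int

theorem two_mul_sum_Ico_zero_id {d : ℤ} (hd : 0 ≤ d) : 2 * ∑ y ∈ Ico 0 d, y = d * (d - 1) := by
  lift d to ℕ using hd
  have h := congrArg (Nat.cast : ℕ → ℤ) (sum_range_id_mul_two d)
  rw [Ico_eq_finset_map, sum_map, sub_zero, toNat_natCast]
  simp only [Function.Embedding.trans_apply, Nat.castEmbedding_apply, addLeftEmbedding_apply,
    zero_add]
  cases d with
  | zero => simp
  | succ d => push_cast at h ⊢; linarith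

theorem sum_Ico_emod_add_mul {d c : ℤ} (hd : 0 < d) (hc : IsCoprime d c) (x L : ℤ) :
    ∑ i ∈ Ico L (L + d), (x + c * i) % d = ∑ y ∈ Ico 0 d, y := by
  have hinj : Set.InjOn (fun i => (x + c * i) % d) (Ico L (L + d)) := by
    intro i hi j hj hij
    simp only [coe_Ico, Set.mem_Ico] at hi hj
    have hdvd : d ∣ c * (j - i) := by
      have := ModEq.dvd (n := d) hij
      rwa [show x + c * j - (x + c * i) = c * (j - i) by ring] at this
    have hmod : (i - L) % d = (j - L) % d :=
      modEq_iff_dvd.2 (by rw [sub_sub_sub_cancel_right]; exact hc.dvd_of_dvd_mul_left hdvd)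
    rw [emod_eq_of_lt (by omega) (by omega), emod_eq_of_lt (by omega) (by omega)] at hmod
    omega
  have himage : (Ico L (L + d)).image (fun i => (x + c * i) % d) = Ico 0 d := by
    refine eq_of_subset_of_card_le (fun y hy => ?_) (by rw [card_image_of_injOn hinj]; simp)
    obtain ⟨i, -, rfl⟩ := mem_image.1 hy
    exact mem_Ico.2 ⟨emod_nonneg _ hd.ne', emod_lt_of_pos _ hd⟩
  rw [← himage, sum_image hinj]

theorem sum_Ico_id_eq_mul_add {d : ℤ} (hd : 0 ≤ d) (L : ℤ) :
    ∑ i ∈ Ico L (L + d), i = d * L + ∑ y ∈ Ico 0 d, y := by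
  have hshift := sum_Ico_add' (fun i => i) 0 d L
  rw [zero_add, add_comm d L] at hshift
  rw [← hshift, sum_add_distrib, sum_const, nsmul_eq_mul, card_Ico_of_le _ _ hd, sub_zero, add_comm]

theorem two_mul_sum_Ico_add_mul_ediv {d c : ℤ} (hd : 0 < d) (hc : IsCoprime d c) (x L : ℤ) :
    2 * ∑ i ∈ Ico L (L + d), (x + c * i) / d = 2 * x + 2 * c * L + (c - 1) * (d - 1) := by
  have hdiv : d * ∑ i ∈ Ico L (L + d), (x + c * i) / d
      = ∑ i ∈ Ico L (L + d), (x + c * i) - ∑ y ∈ Ico 0 d, y := by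
    rw [← sum_Ico_emod_add_mul hd hc x L, mul_sum, ← sum_sub_distrib]
    exact sum_congr rfl fun i _ => by rw [emod_def]; ring
  rw [sum_add_distrib, ← mul_sum, sum_Ico_id_eq_mul_add hd.le, sum_const, nsmul_eq_mul,
    card_Ico_of_le _ _ (by omega), add_sub_cancel_left] at hdiv
  refine mul_left_cancel₀ hd.ne' ?_
  linear_combination 2 * hdiv + (c - 1) * two_mul_sum_Ico_zero_id hd.le

theorem sum_Ico_add_ediv {d : ℤ} (hd : 0 < d) (x L : ℤ) :
    ∑ i ∈ Ico L (L + d), (i + x) / d = x + L := by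
  have h := two_mul_sum_Ico_add_mul_ediv hd isCoprime_one_right x L
  simp only [one_mul, sub_self, zero_mul, add_zero, add_comm x] at h
  linarith

theorem sum_Ico_add_mul_eq_sum_sum {β : Type*} [AddCommMonoid β] (f : ℤ → β) {m : ℤ} (hm : 0 ≤ m)
    (L : ℤ) {d : ℤ} (hd : 0 ≤ d) :
    ∑ i ∈ Ico L (L + m * d), f i = ∑ j ∈ Ico 0 d, ∑ i ∈ Ico L (L + m), f (i + m * j) := by
  induction d, hd using Int.leInduction with
  | base => simp
  | succ d hd ih =>
    rw [show L + m * (d + 1) = L + m + m * d by ring,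
      ← Ico_union_Ico_eq_Ico (show L ≤ L + m * d by nlinarith) (by linarith),
      sum_union (Ico_disjoint_Ico_consecutive _ _ _), ih, ← sum_Ico_add',
      ← insert_Ico_right_eq_Ico_add_one hd, sum_insert (by simp), add_comm]

theorem two_mul_sum_Ico_ediv_of_map_add {v : ℤ → ℤ} {m q : ℤ} (hm : 0 < m) (hq : 0 ≤ q)
    (hv : ∀ i, v (i + m) = v i - q) (L : ℤ) :
    2 * ∑ i ∈ Ico L (L + m * (q + 1)), v i / (q + 1)
      = 2 * ∑ i ∈ Ico L (L + m), v i - m * q * (q + 1) := by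
  have hvj : ∀ i j, v (i + m * j) = v i - q * j := fun i j => by
    induction j using Int.induction_on with
    | zero => simp
    | succ j ih => rw [mul_add_one, ← add_assoc, hv, ih]; ring
    | pred j ih =>
      have := hv (i + m * (-j - 1))
      rw [show i + m * (-j - 1) + m = i + m * -j by ring, ih] at this
      linear_combination -this
  have hblock : ∀ i, 2 * ∑ j ∈ Ico 0 (q + 1), v (i + m * j) / (q + 1) = 2 * v i - q * (q + 1) := by
    intro i
    have hterm : ∀ j, v (i + m * j) / (q + 1) = (j + v i) / (q + 1) - j := fun j => by
      rw [hvj, show v i - q * j = j + v i + (-j) * (q + 1) by ring,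
        add_mul_ediv_right _ _ (by omega)]
      ring
    have hgauss := two_mul_sum_Ico_zero_id (d := q + 1) (by omega)
    have hhermite := sum_Ico_add_ediv (d := q + 1) (by omega) (v i) 0
    rw [zero_add] at hhermite
    rw [sum_congr rfl fun j _ => hterm j, sum_sub_distrib, hhermite]
    linear_combination -hgauss
  rw [sum_Ico_add_mul_eq_sum_sum _ hm.le L (by omega), sum_comm, mul_sum,
    sum_congr rfl fun i _ => hblock i, sum_sub_distrib, sum_const, nsmul_eq_mul,
    card_Ico_of_le _ _ (by omega), add_sub_cancel_left, mul_sum]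
  ring

theorem map_add_mul_of_map_add {F : ℤ → ℤ} {M : ℤ} (hF : ∀ i, F (i + M) = F i + M) (i k : ℤ) :
    F (i + M * k) = F i + M * k := by
  have hper : Function.Periodic (fun i => F i - i) M := fun i => by simp only [hF]; ring
  have := hper.int_mul k i
  rw [Int.cast_id, mul_comm] at this
  linear_combination this

theorem ncard_setOf_le_of_map_add {F : ℤ → ℤ} {M : ℤ} (hM : 0 < M) (hF : ∀ i, F (i + M) = F i + M)
    {a t : ℤ} (ht : ∀ i ∈ Ico (a - M) a, F i ≤ t) :
    ({i | a ≤ i ∧ F i ≤ t}.ncard : ℤ) = ∑ i ∈ Ico (a - M) a, (t - F i) / M := by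
  -- `i ≥ a` is uniquely `i₀ + M k` with `i₀ ∈ [a - M, a)` and `k ≥ 1`, and then
  -- `F i ≤ t ↔ k ≤ (t - F i₀) / M`.
  set S := (Ico (a - M) a).sigma fun i => Icc 1 ((t - F i) / M)
  set φ : (Σ _ : ℤ, ℤ) → ℤ := fun x => x.1 + M * x.2
  have hquot : ∀ x ∈ S, (φ x - (a - M)) / M = x.2 := fun x hx => by
    simp only [S, mem_sigma, mem_Ico] at hx
    rw [show φ x - (a - M) = (x.1 - (a - M)) + x.2 * M by ring, add_mul_ediv_right _ _ hM.ne',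
      ediv_eq_zero_of_lt (by omega) (by omega), zero_add]
  have hinj : Set.InjOn φ S := fun x hx y hy hxy => by
    have h2 : x.2 = y.2 := by rw [← hquot x hx, ← hquot y hy, hxy]
    have h1 : x.1 = y.1 := by simpa [φ, h2] using hxy
    exact Sigma.ext h1 (heq_of_eq h2)
  have himage : {i | a ≤ i ∧ F i ≤ t} = φ '' S := by
    ext i
    simp only [Set.mem_ofPred_eq, Set.mem_image, mem_coe, S, mem_sigma, mem_Ico, mem_Icc]
    constructor
    · rintro ⟨hai, hFi⟩
      set k := (i - (a - M)) / M
      have hdecomp := mul_ediv_add_emod (i - (a - M)) M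
      have hrem := emod_lt_of_pos (i - (a - M)) hM
      have hrem' := emod_nonneg (i - (a - M)) hM.ne'
      have hk : 1 ≤ k := by
        by_contra! hk
        nlinarith
      refine ⟨⟨i - M * k, k⟩, ⟨⟨by linarith, by nlinarith⟩, hk, ?_⟩, by simp [φ]⟩
      rw [Int.le_ediv_iff_mul_le hM]
      have := map_add_mul_of_map_add hF (i - M * k) k
      rw [sub_add_cancel] at this
      linarith
    · rintro ⟨⟨i₀, k⟩, ⟨⟨hi₀, hi₀'⟩, hk, hkt⟩, rfl⟩
      have hMk := Int.mul_le_of_le_ediv hM hkt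
      refine ⟨by simp only [φ]; nlinarith, ?_⟩
      simp only [φ, map_add_mul_of_map_add hF]
      linarith
  rw [himage, hinj.ncard_image, Set.ncard_coe_finset, card_sigma, Nat.cast_sum]
  refine sum_congr rfl fun i hi => ?_
  rw [card_Icc, add_sub_cancel_right, toNat_of_nonneg (ediv_nonneg ?_ hM.le)]
  linarith [ht i hi]

theorem add_mul_add_bounds_iff {d : ℤ} (hd : 0 < d) (i j x : ℤ) :
    (0 ≤ i + d * j + x ∧ i + d * j + x < d) ↔ j = -((i + x) / d) := by
  have hshift : (i + d * j + x) / d = (i + x) / d + j := by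
    rw [show i + d * j + x = i + x + d * j by ring, add_mul_ediv_left _ _ hd.ne']
  rw [eq_neg_iff_add_eq_zero, add_comm j, ← hshift]
  constructor
  · exact fun h => ediv_eq_zero_of_lt h.1 h.2
  · intro h
    have := mul_ediv_add_emod (i + d * j + x) d
    exact ⟨by rw [h] at this; linarith [emod_nonneg (i + d * j + x) hd.ne'],
      by rw [h] at this; linarith [emod_lt_of_pos (i + d * j + x) hd]⟩

end Int

section Weight

def dropHead {α : Type*} {q : ℕ} (r : Fin q → α) : Fin (q - 1) → α :=
  fun μ => r ⟨μ.val + 1, by have := μ.isLt; omega⟩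

theorem sum_eq_add_sum_dropHead {α : Type*} [AddCommMonoid α] {q : ℕ} (hq : 0 < q)
    (r : Fin q → α) : ∑ μ, r μ = r ⟨0, hq⟩ + ∑ μ, dropHead r μ := by
  obtain ⟨q, rfl⟩ := Nat.exists_eq_add_one_of_ne_zero hq.ne'
  exact Fin.sum_univ_succ r

theorem natCast_card_fin_sub_one {q : ℕ} (hq : 0 < q) :
    ((Fintype.card (Fin (q - 1)) : ℕ) : ℤ) = q - 1 := by
  rw [Fintype.card_fin, Nat.cast_pred hq]

theorem natCast_card_fin_sq_sub_one {q : ℕ} (hq : 0 < q) :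
    ((Fintype.card (Fin (q ^ 2 - 1)) : ℕ) : ℤ) = (q : ℤ) ^ 2 - 1 := by
  rw [Fintype.card_fin, Nat.cast_pred (pow_pos hq 2), Nat.cast_pow]

/-- The value of `q³ i + m(q+1)|j| + mq|k|` at the only `j, k` satisfying the box constraints of
`OmegaSet` for the given `i`, with `r` standing for `(r_1, …, r_{q-1})`. -/
def omegaWeight (q : ℕ) (m : ℤ) (r : Fin (q - 1) → ℤ) (s : Fin (q ^ 2 - 1) → ℤ) (i : ℤ) : ℤ :=
  (q : ℤ) ^ 3 * i - m * ((q : ℤ) + 1) * ∑ μ, (i + r μ) / (m * ((q : ℤ) + 1))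
    - m * q * ∑ ν, (i + s ν) / m

variable {q : ℕ} {m : ℤ} (r : Fin (q - 1) → ℤ) (s : Fin (q ^ 2 - 1) → ℤ)

theorem omegaWeight_add_period (hq : 0 < q) (hm : m ≠ 0) (i : ℤ) :
    omegaWeight q m r s (i + m * (q + 1)) = omegaWeight q m r s i + m * (q + 1) := by
  have hM : m * ((q : ℤ) + 1) ≠ 0 := mul_ne_zero hm (by positivity)
  have hr : ∀ μ, (i + m * (q + 1) + r μ) / (m * (q + 1)) = (i + r μ) / (m * (q + 1)) + 1 :=
    fun μ => by rw [add_right_comm, ← Int.add_mul_ediv_right _ 1 hM, one_mul]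
  have hs : ∀ ν, (i + m * (q + 1) + s ν) / m = (i + s ν) / m + (q + 1) :=
    fun ν => by rw [add_right_comm, Int.add_mul_ediv_left _ _ hm]
  simp only [omegaWeight, hr, hs, sum_add_distrib, sum_const, card_univ, nsmul_eq_mul,
    natCast_card_fin_sub_one hq, natCast_card_fin_sq_sub_one hq]
  ring

theorem omegaWeight_eq_emod (hq : 0 < q) (i : ℤ) :
    omegaWeight q m r s i = i - (∑ μ, r μ + q * ∑ ν, s ν)
      + ∑ μ, (i + r μ) % (m * (q + 1)) + q * ∑ ν, (i + s ν) % m := by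
  simp only [Int.emod_def, sum_sub_distrib, ← mul_sum, sum_add_distrib, sum_const, card_univ,
    nsmul_eq_mul, natCast_card_fin_sub_one hq, natCast_card_fin_sq_sub_one hq, omegaWeight]
  ring

theorem omegaWeight_le (hq : 0 < q) (hm : 0 < m) (i : ℤ) :
    omegaWeight q m r s i ≤ i - (∑ μ, r μ + q * ∑ ν, s ν)
      + ((q - 1) * (m * (q + 1) - 1) + q * (q ^ 2 - 1) * (m - 1)) := by
  have hM : 0 < m * ((q : ℤ) + 1) := by positivity
  have hr : ∑ μ, (i + r μ) % (m * (q + 1)) ≤ (q - 1) * (m * (q + 1) - 1) := by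
    have := sum_le_card_nsmul univ _ (m * ((q : ℤ) + 1) - 1)
      fun μ _ => Int.le_sub_one_of_lt (Int.emod_lt_of_pos (i + r μ) hM)
    rwa [card_univ, nsmul_eq_mul, natCast_card_fin_sub_one hq] at this
  have hs : ∑ ν, (i + s ν) % m ≤ (q ^ 2 - 1) * (m - 1) := by
    have := sum_le_card_nsmul univ _ (m - 1)
      fun ν _ => Int.le_sub_one_of_lt (Int.emod_lt_of_pos (i + s ν) hm)
    rwa [card_univ, nsmul_eq_mul, natCast_card_fin_sq_sub_one hq] at this
  rw [omegaWeight_eq_emod r s hq]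
  nlinarith

theorem two_mul_sum_Ico_ediv_omegaWeight (hq : 0 < q) (hm : 0 < m) (hcop : IsCoprime m q)
    (t L : ℤ) :
    2 * ∑ i ∈ Ico L (L + m * (q + 1)), (t - omegaWeight q m r s i) / (m * (q + 1))
      = 2 * (t + ∑ μ, r μ + q * ∑ ν, s ν - L) - (q ^ 3 + 1) * (m - 1) - m * q * (q + 1) := by
  have hM : 0 < m * ((q : ℤ) + 1) := by positivity
  -- `v i = ⌊(t - F i)/m⌋ - (q + 1) Σ_μ ⌊(i + r_μ)/m(q+1)⌋`; it drops by `q` when `i` grows by `m`.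
  set v : ℤ → ℤ := fun i => (t + -(q : ℤ) ^ 3 * i) / m + q * ∑ ν, (i + s ν) / m with hv_def
  have hsplit : ∀ i, (t - omegaWeight q m r s i) / (m * (q + 1))
      = ∑ μ, (i + r μ) / (m * (q + 1)) + v i / (q + 1) := fun i => by
    rw [show t - omegaWeight q m r s i = t + -(q : ℤ) ^ 3 * i + (q * ∑ ν, (i + s ν) / m) * m
        + (∑ μ, (i + r μ) / (m * (q + 1))) * (m * (q + 1)) by simp only [omegaWeight]; ring,
      Int.add_mul_ediv_right _ _ hM.ne', Int.ediv_mul_of_nonneg hm.le,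
      Int.add_mul_ediv_right _ _ hm.ne', add_comm]
  have hv : ∀ i, v (i + m) = v i - q := fun i => by
    have hs : ∀ ν, (i + m + s ν) / m = (i + s ν) / m + 1 :=
      fun ν => by rw [add_right_comm, ← Int.add_mul_ediv_right _ 1 hm.ne', one_mul]
    simp only [hv_def, hs, sum_add_distrib, sum_const, card_univ, nsmul_eq_mul,
      natCast_card_fin_sq_sub_one hq, mul_add, ← add_assoc, Int.add_mul_ediv_right _ _ hm.ne']
    ring
  have hr : ∑ μ, ∑ i ∈ Ico L (L + m * (q + 1)), (i + r μ) / (m * (q + 1))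
      = ∑ μ, r μ + (q - 1) * L := by
    simp only [Int.sum_Ico_add_ediv hM, sum_add_distrib, sum_const, card_univ, nsmul_eq_mul,
      natCast_card_fin_sub_one hq]
  have hs : ∑ ν, ∑ i ∈ Ico L (L + m), (i + s ν) / m = ∑ ν, s ν + (q ^ 2 - 1) * L := by
    simp only [Int.sum_Ico_add_ediv hm, sum_add_distrib, sum_const, card_univ, nsmul_eq_mul,
      natCast_card_fin_sq_sub_one hq]
  have hvsum : ∑ i ∈ Ico L (L + m), v i
      = ∑ i ∈ Ico L (L + m), (t + -(q : ℤ) ^ 3 * i) / m + q * (∑ ν, s ν + (q ^ 2 - 1) * L) := by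
    rw [hv_def, sum_add_distrib, ← mul_sum, sum_comm, hs]
  have hfloor := Int.two_mul_sum_Ico_add_mul_ediv hm (hcop.pow_right (n := 3)).neg_right t L
  have hdouble := Int.two_mul_sum_Ico_ediv_of_map_add hm (Nat.cast_nonneg q) hv L
  rw [sum_congr rfl fun i _ => hsplit i, sum_add_distrib, sum_comm, mul_add, hr, hdouble, hvsum]
  linear_combination hfloor

end Weight

theorem OmegaSet_eq_image {q : ℕ} (hq : 0 < q) {m : ℤ} (hm : 0 < m) (r : Fin q → ℤ)
    (s : Fin (q ^ 2 - 1) → ℤ) (t : ℤ) :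
    OmegaSet q hq m r s t
      = (fun i => (i, fun μ => -((i + dropHead r μ) / (m * (q + 1))), fun ν => -((i + s ν) / m)))
        '' {i | -r ⟨0, hq⟩ ≤ i ∧ omegaWeight q m (dropHead r) s i ≤ t} := by
  have hM : 0 < m * ((q : ℤ) + 1) := by positivity
  have hweight : ∀ i, (q : ℤ) ^ 3 * i + m * (q + 1) * ∑ μ, -((i + dropHead r μ) / (m * (q + 1)))
      + m * q * ∑ ν, -((i + s ν) / m) = omegaWeight q m (dropHead r) s i := fun i => by
    simp only [omegaWeight, sum_neg_distrib]
    ring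
  ext ⟨i, j, k⟩
  simp only [OmegaSet, Set.mem_ofPred_eq, Set.mem_image, Prod.mk.injEq,
    Int.add_mul_add_bounds_iff hM, Int.add_mul_add_bounds_iff hm]
  constructor
  · rintro ⟨h0, hj, hk, ht⟩
    obtain rfl : j = _ := funext hj
    obtain rfl : k = _ := funext hk
    exact ⟨i, ⟨by linarith, hweight i ▸ ht⟩, rfl, rfl, rfl⟩
  · rintro ⟨i, ⟨h0, ht⟩, rfl, rfl, rfl⟩
    exact ⟨by linarith, fun _ => rfl, fun _ => rfl, (hweight i).symm ▸ ht⟩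

theorem ncard_OmegaSet_eq {q : ℕ} (hq : 0 < q) {m : ℤ} (hm : 0 < m) (r : Fin q → ℤ)
    (s : Fin (q ^ 2 - 1) → ℤ) (t : ℤ) :
    (OmegaSet q hq m r s t).ncard
      = {i | -r ⟨0, hq⟩ ≤ i ∧ omegaWeight q m (dropHead r) s i ≤ t}.ncard := by
  rw [OmegaSet_eq_image hq hm]
  exact Set.ncard_image_of_injective _ fun _ _ h => congrArg Prod.fst h

theorem pow_three_mul_le_sum_of_mem_lowerBounds {q : ℕ} (hq : 0 < q) {r : Fin q → ℤ}
    {s : Fin (q ^ 2 - 1) → ℤ} {w : ℤ} (hw : w ∈ lowerBounds (Set.range r ∪ Set.range s)) :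
    (q : ℤ) ^ 3 * w ≤ ∑ μ, r μ + q * ∑ ν, s ν := by
  have hr := card_nsmul_le_sum univ r w fun μ _ => hw (Or.inl ⟨μ, rfl⟩)
  have hs := card_nsmul_le_sum univ s w fun ν _ => hw (Or.inr ⟨ν, rfl⟩)
  rw [card_univ, nsmul_eq_mul, Fintype.card_fin] at hr
  rw [card_univ, nsmul_eq_mul, natCast_card_fin_sq_sub_one hq] at hs
  have hq0 : (0 : ℤ) ≤ q := Nat.cast_nonneg q
  nlinarith

theorem isCoprime_of_mul_add_one_eq_pow_add_one {m q : ℤ} {n : ℕ} (hn : n ≠ 0)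
    (h : m * (q + 1) = q ^ n + 1) : IsCoprime m q :=
  ⟨q + 1, -q ^ (n - 1), by
    rw [neg_mul, ← pow_succ, Nat.sub_add_cancel (by omega), mul_comm, h]; ring⟩

theorem card_OmegaSet_general (q n : ℕ) (hq : IsPrimePow q) (hn1 : 1 < n)
    (m g : ℤ) (hm : m * ((q : ℤ) + 1) = (q : ℤ) ^ n + 1)
    (hg : 2 * g = ((q : ℤ) - 1) * ((q : ℤ) ^ (n + 1) + (q : ℤ) ^ n - (q : ℤ) ^ 2))
    (r : Fin q → ℤ) (s : Fin (q ^ 2 - 1) → ℤ) (t w : ℤ)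
    (hw : IsLeast (Set.range r ∪ Set.range s) w)
    (ht : 2 * g - 1 - (q : ℤ) ^ 3 * w ≤ t) :
    ((OmegaSet q hq.pos m r s t).ncard : ℤ)
      = 1 - g + t + (∑ μ, r μ) + (q : ℤ) * (∑ ν, s ν) := by
  have hm0 : 0 < m :=
    pos_of_mul_pos_left (b := (q : ℤ) + 1) (by rw [hm]; positivity) (by positivity)
  have hgenus : ((q : ℤ) - 1) * (m * (q + 1) - 1) + q * (q ^ 2 - 1) * (m - 1) = 2 * g := by
    linear_combination ((q : ℤ) ^ 2 - 1) * hm - hg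
  have hmin := pow_three_mul_le_sum_of_mem_lowerBounds hq.pos hw.2
  rw [sum_eq_add_sum_dropHead hq.pos] at hmin ⊢
  set r₀ := r ⟨0, hq.pos⟩
  have hbelow : ∀ i ∈ Ico (-r₀ - m * (q + 1)) (-r₀), omegaWeight q m (dropHead r) s i ≤ t :=
    fun i hi => by linarith [(mem_Ico.1 hi).2, omegaWeight_le (dropHead r) s hq.pos hm0 i]
  have hsum := two_mul_sum_Ico_ediv_omegaWeight (dropHead r) s hq.pos hm0
    (isCoprime_of_mul_add_one_eq_pow_add_one (by omega) hm) t (-r₀ - m * (q + 1))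
  rw [sub_add_cancel] at hsum
  rw [ncard_OmegaSet_eq hq.pos hm0, Int.ncard_setOf_le_of_map_add (by positivity)
    (omegaWeight_add_period _ s hq.pos hm0.ne') hbelow]
  linarith

/-- If `t ≥ 2g - 1 - q³ w`, where `w` is the minimum of all the coordinates of `r` and `s`,
then `#Ω_{r,s,t} = 1 - g + t + |r| + q |s|`. -/
theorem card_OmegaSet (q n : ℕ) (hq : IsPrimePow q) (hn : Odd n) (hn1 : 1 < n)
    (m g : ℤ) (hm : m * ((q : ℤ) + 1) = (q : ℤ) ^ n + 1)
    (hg : 2 * g = ((q : ℤ) - 1) * ((q : ℤ) ^ (n + 1) + (q : ℤ) ^ n - (q : ℤ) ^ 2))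
    (r : Fin q → ℤ) (s : Fin (q ^ 2 - 1) → ℤ) (t w : ℤ)
    (hw : IsLeast (Set.range r ∪ Set.range s) w)
    (ht : 2 * g - 1 - (q : ℤ) ^ 3 * w ≤ t) :
    ((OmegaSet q hq.pos m r s t).ncard : ℤ)
      = 1 - g + t + (∑ μ, r μ) + (q : ℤ) * (∑ ν, s ν) :=
  card_OmegaSet_general q n hq hn1 m g hm hg r s t w hw ht
end

section
/- If t ≥ 2g − 1, then the cardinality of Ω_{0,0,t} (i.e. Ω_{r,s,t} with r the zero vector in ℤ^q and s the zero vector in ℤ^{q²−1}) is #Ω_{0,0,t} = 1 − g + t. -/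
open Finset

lemma two_mul_sum_Ico_zero_id {z : ℤ} (hz : 0 ≤ z) : 2 * ∑ x ∈ Ico 0 z, x = z * (z - 1) := by
  induction z, hz using Int.leInduction with
  | base => simp
  | succ z hz ih =>
    rw [← insert_Ico_right_eq_Ico_add_one hz, sum_insert (by simp), mul_add, ih]
    ring

lemma sum_emod_eq_sum_Ico {ι : Type*} {s : Finset ι} {f : ι → ℤ} {M : ℤ} (hM : 0 < M)
    (hcard : (#s : ℤ) = M) (hinj : Set.InjOn (fun x => f x % M) s) :
    ∑ x ∈ s, f x % M = ∑ r ∈ Ico 0 M, r := by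
  classical
  have himage : s.image (fun x => f x % M) = Ico 0 M := by
    refine eq_of_subset_of_card_le (image_subset_iff.2 fun x _ => mem_Ico.2
      ⟨Int.emod_nonneg _ hM.ne', Int.emod_lt_of_pos _ hM⟩) ?_
    rw [card_image_of_injOn hinj, Int.card_Ico]
    omega
  rw [← himage, sum_image hinj]

lemma modEq_injOn_mixedRadix {m n u v : ℤ} (hu : IsCoprime m u) (hv : IsCoprime n v) :
    ∀ x ∈ Ico 0 m ×ˢ Ico 0 n, ∀ y ∈ Ico 0 m ×ˢ Ico 0 n,
      u * x.1 + m * v * x.2 ≡ u * y.1 + m * v * y.2 [ZMOD m * n] → x = y := by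
  rintro ⟨a, b⟩ hx ⟨a', b'⟩ hy h
  simp only [mem_product, mem_Ico] at hx hy
  have hdvd : m * n ∣ u * (a' - a) + m * (v * (b' - b)) := by
    convert h.dvd using 1
    ring
  have ha : a = a' := by
    have hm : m ∣ (a' - a) * u := by
      rw [mul_comm]
      exact (dvd_add_left (dvd_mul_right m _)).mp ((dvd_mul_right m n).trans hdvd)
    have := Int.eq_zero_of_abs_lt_dvd (hu.dvd_of_dvd_mul_right hm) (by rw [abs_lt]; omega)
    omega
  subst ha
  have hn : n ∣ (b' - b) * v := by
    rw [sub_self, mul_zero, zero_add] at hdvd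
    rw [mul_comm]
    exact (mul_dvd_mul_iff_left (by omega)).mp hdvd
  have := Int.eq_zero_of_abs_lt_dvd (hv.dvd_of_dvd_mul_right hn) (by rw [abs_lt]; omega)
  simp only [Prod.mk.injEq, true_and]
  omega

lemma two_mul_sum_mixedRadix {m n : ℤ} (hm : 0 ≤ m) (hn : 0 ≤ n) (u v : ℤ) :
    2 * ∑ x ∈ Ico 0 m ×ˢ Ico 0 n, (u * x.1 + m * v * x.2) =
      m * n * (u * (m - 1) + m * v * (n - 1)) := by
  have hA := two_mul_sum_Ico_zero_id hm
  have hB := two_mul_sum_Ico_zero_id hn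
  simp only [sum_product, sum_add_distrib, ← mul_sum, sum_const, Int.card_Ico, sub_zero,
    nsmul_eq_mul, Int.toNat_of_nonneg hm, Int.toNat_of_nonneg hn]
  rw [← mul_sum]
  linear_combination (n * u) * hA + (m * m * v) * hB

def translatesLE {ι : Type*} (s : Finset ι) (f : ι → ℤ) (M t : ℤ) : Set (ι × ℤ) :=
  {p | p.1 ∈ s ∧ 0 ≤ p.2 ∧ f p.1 + M * p.2 ≤ t}

section translatesLE

variable {ι : Type*} {s : Finset ι} {f : ι → ℤ} {M : ℤ} (t : ℤ)

lemma ncard_translatesLE (hM : 0 < M) (hle : ∀ x ∈ s, f x ≤ t + M) :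
    ((translatesLE s f M t).ncard : ℤ) = ∑ x ∈ s, ((t - f x) / M + 1) := by
  have hset : translatesLE s f M t =
      Equiv.sigmaEquivProd ι ℤ '' ↑(s.sigma fun x => Icc 0 ((t - f x) / M)) := by
    ext ⟨x, c⟩
    simp only [translatesLE, Set.mem_ofPred_eq, Set.mem_image, mem_coe, mem_sigma, mem_Icc,
      Int.le_ediv_iff_mul_le hM]
    constructor
    · rintro ⟨hx, hc, hle⟩
      exact ⟨⟨x, c⟩, ⟨hx, hc, by linarith⟩, rfl⟩
    · rintro ⟨⟨x, c⟩, ⟨hx, hc, hle⟩, h⟩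
      simp only [Equiv.sigmaEquivProd_apply, Prod.mk.injEq] at h
      obtain ⟨rfl, rfl⟩ := h
      exact ⟨hx, hc, by linarith⟩
  rw [hset, Set.ncard_image_of_injective _ (Equiv.injective _), Set.ncard_coe_finset, card_sigma]
  push_cast
  refine sum_congr rfl fun x hx => ?_
  have : -1 ≤ (t - f x) / M := (Int.le_ediv_iff_mul_le hM).2 (by linarith [hle x hx])
  rw [Int.card_Icc, Int.toNat_of_nonneg (by omega)]
  ring

-- Selmer's formula for the genus of a numerical semigroup in terms of an Apéry set.
lemma two_mul_mul_ncard_translatesLE (hM : 0 < M) (hcard : (#s : ℤ) = M)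
    (hres : ∀ x ∈ s, ∀ y ∈ s, f x ≡ f y [ZMOD M] → x = y) (hle : ∀ x ∈ s, f x ≤ t + M) :
    2 * M * (translatesLE s f M t).ncard = M * (2 * t + M + 1) - 2 * ∑ x ∈ s, f x := by
  have hinj : Set.InjOn (fun x => (t - f x) % M) s := fun x hx y hy h =>
    hres x hx y hy (by simpa only [sub_sub_cancel] using (Int.ModEq.refl t).sub h)
  have hfloor : ∀ x, M * ((t - f x) / M) = t - f x - (t - f x) % M := fun x => by
    linarith [Int.emod_add_mul_ediv (t - f x) M]
  have hsum : ∑ x ∈ s, M * ((t - f x) / M) = M * t - ∑ x ∈ s, f x - ∑ r ∈ Ico 0 M, r := by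
    rw [sum_congr rfl fun x _ => hfloor x, sum_sub_distrib, sum_sub_distrib,
      sum_emod_eq_sum_Ico hM hcard hinj, sum_const, nsmul_eq_mul, hcard]
  rw [ncard_translatesLE t hM hle, mul_assoc, mul_sum, sum_congr rfl fun x _ => mul_add _ _ _,
    sum_add_distrib, hsum, sum_const, nsmul_eq_mul, hcard]
  linear_combination (-1) * two_mul_sum_Ico_zero_id hM.le

end translatesLE

lemma isCoprime_of_dvd_pow_add_one {m q : ℤ} {n : ℕ} (hn : 0 < n) (h : m ∣ q ^ n + 1) :
    IsCoprime m q := by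
  have : IsCoprime (q ^ n + 1) q := by
    simpa [← pow_succ', Nat.sub_add_cancel hn, add_comm] using
      (isCoprime_one_left (x := q)).add_mul_left_left (q ^ (n - 1))
  exact this.of_isCoprime_of_dvd_left h

lemma ediv_mixedRadix {m n a b : ℤ} (c : ℤ) (ha : 0 ≤ a) (ha' : a < m) (hb : 0 ≤ b) (hb' : b < n) :
    (a + m * b + m * n * c) / m = b + n * c ∧ (a + m * b + m * n * c) / (m * n) = c := by
  have hm : (a + m * b + m * n * c) / m = b + n * c := by
    rw [show a + m * b + m * n * c = a + m * (b + n * c) by ring,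
      Int.add_mul_ediv_left _ _ (by omega), Int.ediv_eq_zero_of_lt ha ha', zero_add]
  refine ⟨hm, ?_⟩
  rw [← Int.ediv_ediv_of_nonneg (by omega), hm, Int.add_mul_ediv_left _ _ (by omega),
    Int.ediv_eq_zero_of_lt hb hb', zero_add]

lemma add_mul_mem_Ico_iff {M : ℤ} (hM : 0 < M) (i j : ℤ) :
    i + M * j ∈ Set.Ico 0 M ↔ j = -(i / M) := by
  rw [Set.mem_Ico]
  constructor
  · rintro ⟨h0, h1⟩
    have := ((Int.ediv_emod_unique (r := i + M * j) (q := -j) hM).2 ⟨by ring, h0, h1⟩).1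
    omega
  · rintro rfl
    have := Int.emod_add_mul_ediv i M
    have := Int.emod_nonneg i hM.ne'
    have := Int.emod_lt_of_pos i hM
    constructor <;> linarith

section OmegaSet

variable {q : ℕ} (hq : 0 < q) {m : ℤ} (t : ℤ)

lemma mem_OmegaSet_zero_iff (hm : 0 < m) {p : ℤ × (Fin (q - 1) → ℤ) × (Fin (q ^ 2 - 1) → ℤ)} :
    p ∈ OmegaSet q hq m (fun _ => 0) (fun _ => 0) t ↔
      0 ≤ p.1 ∧ p.2.1 = (fun _ => -(p.1 / (m * (q + 1)))) ∧ p.2.2 = (fun _ => -(p.1 / m)) ∧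
        q ^ 3 * p.1 - m * (q + 1) * (q - 1) * (p.1 / (m * (q + 1)))
          - m * q * (q ^ 2 - 1) * (p.1 / m) ≤ t := by
  obtain ⟨i, j, k⟩ := p
  have hM : 0 < m * ((q : ℤ) + 1) := by positivity
  have hj : (∀ μ, i + m * (q + 1) * j μ ∈ Set.Ico 0 (m * ((q : ℤ) + 1))) ↔
      j = fun _ => -(i / (m * (q + 1))) := by
    simp only [funext_iff]
    exact forall_congr' fun μ => add_mul_mem_Ico_iff hM i (j μ)
  have hk : (∀ ν, i + m * k ν ∈ Set.Ico 0 m) ↔ k = fun _ => -(i / m) := by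
    simp only [funext_iff]
    exact forall_congr' fun ν => add_mul_mem_Ico_iff hm i (k ν)
  simp only [OmegaSet, Set.mem_ofPred_eq, add_zero, ← Set.mem_Ico, hj, hk]
  refine and_congr_right fun _ => and_congr_right fun hj => and_congr_right fun hk => ?_
  subst hj hk
  simp only [sum_const, card_univ, Fintype.card_fin, nsmul_eq_mul,
    Nat.cast_sub (Nat.one_le_iff_ne_zero.2 hq.ne'), Nat.cast_sub (Nat.one_le_pow 2 q hq)]
  push_cast
  constructor <;> intro h <;> linarith

-- `i = a + m b + m (q + 1) c` in mixed radix; the constraints of `Ω` force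
-- `j_μ = -⌊i / m(q+1)⌋ = -c` and `k_ν = -⌊i / m⌋ = -(b + (q + 1) c)`.
def omegaParam (q : ℕ) (m : ℤ) (p : (ℤ × ℤ) × ℤ) :
    ℤ × (Fin (q - 1) → ℤ) × (Fin (q ^ 2 - 1) → ℤ) :=
  (p.1.1 + m * p.1.2 + m * (q + 1) * p.2, fun _ => -p.2, fun _ => -(p.1.2 + (q + 1) * p.2))

lemma OmegaSet_zero_eq_image (hm : 0 < m) :
    OmegaSet q hq m (fun _ => 0) (fun _ => 0) t = omegaParam q m ''
      translatesLE (Ico 0 m ×ˢ Ico 0 ((q : ℤ) + 1)) (fun x => q ^ 3 * x.1 + m * q * x.2)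
        (m * (q + 1)) t := by
  have hq1 : (0 : ℤ) < q + 1 := by positivity
  ext ⟨i, j, k⟩
  rw [mem_OmegaSet_zero_iff hq t hm]
  dsimp only
  constructor
  · rintro ⟨hi, rfl, rfl, hw⟩
    have hix : i % m + m * (i / m) = i := Int.emod_add_mul_ediv i m
    have hxc : i / m % (q + 1) + (q + 1) * (i / m / (q + 1)) = i / m :=
      Int.emod_add_mul_ediv _ _
    have hc : i / (m * (q + 1)) = i / m / (q + 1) := (Int.ediv_ediv_of_nonneg hm.le).symm
    refine ⟨((i % m, i / m % (q + 1)), i / m / (q + 1)), ⟨?_, ?_, ?_⟩, ?_⟩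
    · simp only [mem_product, mem_Ico]
      exact ⟨⟨Int.emod_nonneg _ hm.ne', Int.emod_lt_of_pos _ hm⟩,
        ⟨Int.emod_nonneg _ hq1.ne', Int.emod_lt_of_pos _ hq1⟩⟩
    · exact Int.ediv_nonneg (Int.ediv_nonneg hi hm.le) hq1.le
    · rw [hc] at hw
      linear_combination hw + q ^ 3 * hix + m * q ^ 3 * hxc - m * q * (q ^ 2 - 1) * hxc
    · simp only [omegaParam, Prod.mk.injEq, hc]
      exact ⟨by linear_combination hix + m * hxc, trivial, by rw [hxc]⟩
  · rintro ⟨⟨⟨a, b⟩, c⟩, ⟨hab, hc, hw⟩, h⟩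
    simp only [mem_product, mem_Ico] at hab
    simp only [omegaParam, Prod.mk.injEq] at h
    obtain ⟨rfl, rfl, rfl⟩ := h
    obtain ⟨hdiv, hdiv'⟩ := ediv_mixedRadix c hab.1.1 hab.1.2 hab.2.1 hab.2.2
    refine ⟨?_, by rw [hdiv'], by rw [hdiv], ?_⟩
    · have := mul_nonneg hm.le hab.2.1
      have := mul_nonneg (mul_nonneg hm.le hq1.le) hc
      linarith
    rw [hdiv, hdiv']
    linear_combination hw

lemma injOn_omegaParam :
    Set.InjOn (omegaParam q m) {p | p.1 ∈ Ico 0 m ×ˢ Ico 0 ((q : ℤ) + 1)} := by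
  rintro ⟨⟨a, b⟩, c⟩ h ⟨⟨a', b'⟩, c'⟩ h' he
  simp only [Set.mem_ofPred_eq, mem_product, mem_Ico] at h h'
  have hi := congrArg Prod.fst he
  simp only [omegaParam] at hi
  obtain ⟨hdiv, hdiv'⟩ := ediv_mixedRadix c h.1.1 h.1.2 h.2.1 h.2.2
  obtain ⟨hdiv2, hdiv2'⟩ := ediv_mixedRadix c' h'.1.1 h'.1.2 h'.2.1 h'.2.2
  rw [hi, hdiv2'] at hdiv'
  rw [hi, hdiv2, hdiv'] at hdiv
  simp only [Prod.mk.injEq]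
  refine ⟨⟨?_, by linarith⟩, hdiv'.symm⟩
  rw [hdiv', show b = b' by linarith] at hi
  linarith

end OmegaSet

theorem card_OmegaSet_zero_general (q n : ℕ) (hq : IsPrimePow q) (hn : Odd n)
    (m g : ℤ) (hm : m * ((q : ℤ) + 1) = (q : ℤ) ^ n + 1)
    (hg : 2 * g = ((q : ℤ) - 1) * ((q : ℤ) ^ (n + 1) + (q : ℤ) ^ n - (q : ℤ) ^ 2))
    (t : ℤ) (ht : 2 * g - 1 ≤ t) :
    ((OmegaSet q hq.pos m (fun _ => 0) (fun _ => 0) t).ncard : ℤ) = 1 - g + t := by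
  have hq0 : (0 : ℤ) < q := by exact_mod_cast hq.pos
  have hM : 0 < m * ((q : ℤ) + 1) := by
    rw [hm]
    positivity
  have hm0 : 0 < m := pos_of_mul_pos_left hM (by positivity)
  have hcop : IsCoprime m ((q : ℤ) ^ 3) :=
    (isCoprime_of_dvd_pow_add_one hn.pos ⟨_, hm.symm⟩).pow_right
  have hgM : 2 * g - 1 = q ^ 3 * (m - 1) + m * q * q - m * (q + 1) := by
    linear_combination hg - (q ^ 2 - 1) * hm
  have hcard : (#(Ico 0 m ×ˢ Ico 0 ((q : ℤ) + 1)) : ℤ) = m * (q + 1) := by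
    rw [card_product, Int.card_Ico, Int.card_Ico, sub_zero, sub_zero, Nat.cast_mul,
      Int.toNat_of_nonneg hm0.le, Int.toNat_of_nonneg (by positivity)]
  have hle : ∀ x ∈ Ico 0 m ×ˢ Ico 0 ((q : ℤ) + 1),
      q ^ 3 * x.1 + m * q * x.2 ≤ t + m * (q + 1) := by
    intro x hx
    simp only [mem_product, mem_Ico] at hx
    have := mul_le_mul_of_nonneg_left (show x.1 ≤ m - 1 by omega) (pow_nonneg hq0.le 3)
    have := mul_le_mul_of_nonneg_left (show x.2 ≤ q by omega) (mul_nonneg hm0.le hq0.le)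
    linarith
  have key := two_mul_mul_ncard_translatesLE t hM hcard
    (modEq_injOn_mixedRadix hcop ⟨1, -1, by ring⟩) hle
  rw [two_mul_sum_mixedRadix hm0.le (by positivity)] at key
  rw [OmegaSet_zero_eq_image hq.pos t hm0,
    (injOn_omegaParam.mono fun p hp => hp.1).ncard_image]
  refine mul_left_cancel₀ (mul_ne_zero two_ne_zero hM.ne') ?_
  linear_combination key + m * (q + 1) * hgM

/-- If `t ≥ 2g - 1`, then `#Ω_{0,0,t} = 1 - g + t`. -/
theorem card_OmegaSet_zero (q n : ℕ) (hq : IsPrimePow q) (hn : Odd n) (hn1 : 1 < n)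
    (m g : ℤ) (hm : m * ((q : ℤ) + 1) = (q : ℤ) ^ n + 1)
    (hg : 2 * g = ((q : ℤ) - 1) * ((q : ℤ) ^ (n + 1) + (q : ℤ) ^ n - (q : ℤ) ^ 2))
    (t : ℤ) (ht : 2 * g - 1 ≤ t) :
    ((OmegaSet q hq.pos m (fun _ => 0) (fun _ => 0) t).ncard : ℤ) = 1 - g + t :=
  card_OmegaSet_zero_general q n hq hn m g hm hg t ht
end

section
/- The cardinality #Ω_{r,s,t} is symmetric with respect to the coordinates r_0,r_1,…,r_{q−1} of r and with respect to the coordinates s_1,s_2,…,s_{q²−1} of s: if r' = (r'_0,…,r'_{q−1}) is obtained from r by a permutation of its coordinates and s' = (s'_1,…,s'_{q²−1}) is obtained from s by a permutation of its coordinates, then #Ω_{r,s,t} = #Ω_{r',s',t}. -/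
namespace OmegaAux

lemma sum_fin_split {M : Type*} [AddCommMonoid M] (q : ℕ) (hq : 0 < q) (g : Fin q → M) :
    ∑ x, g x = g ⟨0, hq⟩ + ∑ μ : Fin (q - 1), g ⟨μ.val + 1, by have := μ.isLt; omega⟩ := by
  obtain ⟨Q, rfl⟩ : ∃ Q, q = Q + 1 := ⟨q - 1, by omega⟩
  rw [Fin.sum_univ_succ]
  rfl

/-- The symmetric, `M`-periodic function governing the weighted sum. -/
def cfun (q : ℕ) (m : ℤ) (r : Fin q → ℤ) (s : Fin (q ^ 2 - 1) → ℤ) (a : ℤ) : ℤ :=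
  (∑ μ, ((a + r μ) % (m * ((q : ℤ) + 1)) - r μ)) + q * ∑ ν, ((a + s ν) % m - s ν)

lemma cfun_perm (q : ℕ) (m : ℤ) (r : Fin q → ℤ) (s : Fin (q ^ 2 - 1) → ℤ)
    (σ : Equiv.Perm (Fin q)) (τ : Equiv.Perm (Fin (q ^ 2 - 1))) (a : ℤ) :
    cfun q m (r ∘ σ) (s ∘ τ) a = cfun q m r s a := by
  unfold cfun
  congr 1
  · exact Equiv.sum_comp σ (fun μ => (a + r μ) % (m * ((q : ℤ) + 1)) - r μ)
  · congr 1
    exact Equiv.sum_comp τ (fun ν => (a + s ν) % m - s ν)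

lemma emod_add_emod' (a x M d : ℤ) (h : d ∣ M) : (a % M + x) % d = (a + x) % d := by
  rw [Int.add_emod, Int.emod_emod_of_dvd a h, ← Int.add_emod]

lemma cfun_emod (q : ℕ) (m : ℤ) (r : Fin q → ℤ) (s : Fin (q ^ 2 - 1) → ℤ) (a : ℤ) :
    cfun q m r s (a % (m * ((q : ℤ) + 1))) = cfun q m r s a := by
  unfold cfun
  congr 1
  · exact Finset.sum_congr rfl fun μ _ => by rw [emod_add_emod' _ _ _ _ dvd_rfl]
  · congr 1
    exact Finset.sum_congr rfl fun ν _ => by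
      rw [emod_add_emod' _ _ _ _ ⟨(q : ℤ) + 1, rfl⟩]

/-- Key identity: given the interval conditions, the weighted sum equals
`cfun i + M * ((i + r 0) / M)`. -/
lemma weight_eq (q : ℕ) (hq : 0 < q) (m : ℤ) (hm : 0 < m)
    (r : Fin q → ℤ) (s : Fin (q ^ 2 - 1) → ℤ)
    (i : ℤ) (j : Fin (q - 1) → ℤ) (k : Fin (q ^ 2 - 1) → ℤ)
    (hj : ∀ μ : Fin (q - 1),
      0 ≤ i + m * ((q : ℤ) + 1) * j μ + r ⟨μ.val + 1, by have := μ.isLt; omega⟩ ∧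
      i + m * ((q : ℤ) + 1) * j μ + r ⟨μ.val + 1, by have := μ.isLt; omega⟩
        < m * ((q : ℤ) + 1))
    (hk : ∀ ν : Fin (q ^ 2 - 1), 0 ≤ i + m * k ν + s ν ∧ i + m * k ν + s ν < m) :
    (q : ℤ) ^ 3 * i + m * ((q : ℤ) + 1) * (∑ μ, j μ) + m * (q : ℤ) * (∑ ν, k ν)
      = cfun q m r s i
        + m * ((q : ℤ) + 1) * ((i + r ⟨0, hq⟩) / (m * ((q : ℤ) + 1))) := by
  set M : ℤ := m * ((q : ℤ) + 1) with hMdef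
  have hjval : ∀ μ : Fin (q - 1),
      (i + r ⟨μ.val + 1, by have := μ.isLt; omega⟩) % M
        = i + M * j μ + r ⟨μ.val + 1, by have := μ.isLt; omega⟩ := by
    intro μ
    have h := hj μ
    have h2 : (i + M * j μ + r ⟨μ.val + 1, by have := μ.isLt; omega⟩) % M
        = (i + r ⟨μ.val + 1, by have := μ.isLt; omega⟩) % M := by
      rw [show i + M * j μ + r ⟨μ.val + 1, by have := μ.isLt; omega⟩
          = (i + r ⟨μ.val + 1, by have := μ.isLt; omega⟩) + M * j μ by ring,
        Int.add_mul_emod_self_left]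
    rw [← h2, Int.emod_eq_of_lt h.1 h.2]
  have hkval : ∀ ν : Fin (q ^ 2 - 1), (i + s ν) % m = i + m * k ν + s ν := by
    intro ν
    have h := hk ν
    have h2 : (i + m * k ν + s ν) % m = (i + s ν) % m := by
      rw [show i + m * k ν + s ν = (i + s ν) + m * k ν by ring,
        Int.add_mul_emod_self_left]
    rw [← h2, Int.emod_eq_of_lt h.1 h.2]
  have h0 : (i + r ⟨0, hq⟩) % M = i + r ⟨0, hq⟩ - M * ((i + r ⟨0, hq⟩) / M) :=
    Int.emod_def _ _
  have hsum1 : (∑ μ : Fin q, ((i + r μ) % M - r μ))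
      = (i + r ⟨0, hq⟩ - M * ((i + r ⟨0, hq⟩) / M) - r ⟨0, hq⟩)
        + (((q : ℤ) - 1) * i + M * ∑ μ, j μ) := by
    rw [sum_fin_split q hq (fun μ => (i + r μ) % M - r μ), h0]
    congr 1
    have : ∀ μ : Fin (q - 1),
        (i + r ⟨μ.val + 1, by have := μ.isLt; omega⟩) % M
          - r ⟨μ.val + 1, by have := μ.isLt; omega⟩ = i + M * j μ := by
      intro μ; rw [hjval μ]; ring
    rw [Finset.sum_congr rfl fun μ _ => this μ, Finset.sum_add_distrib,
      Finset.sum_const, ← Finset.mul_sum]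
    simp only [Finset.card_univ, Fintype.card_fin, nsmul_eq_mul]
    have : ((q - 1 : ℕ) : ℤ) = (q : ℤ) - 1 := by
      have : 1 ≤ q := hq
      push_cast [Nat.cast_sub this]
      ring
    rw [this]
  have hsum2 : (∑ ν : Fin (q ^ 2 - 1), ((i + s ν) % m - s ν))
      = ((q : ℤ) ^ 2 - 1) * i + m * ∑ ν, k ν := by
    have : ∀ ν : Fin (q ^ 2 - 1), (i + s ν) % m - s ν = i + m * k ν := by
      intro ν; rw [hkval ν]; ring
    rw [Finset.sum_congr rfl fun ν _ => this ν, Finset.sum_add_distrib,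
      Finset.sum_const, ← Finset.mul_sum]
    simp only [Finset.card_univ, Fintype.card_fin, nsmul_eq_mul]
    have h1 : 1 ≤ q ^ 2 := Nat.one_le_pow _ _ hq
    have : ((q ^ 2 - 1 : ℕ) : ℤ) = (q : ℤ) ^ 2 - 1 := by
      push_cast [Nat.cast_sub h1]
      ring
    rw [this]
  unfold cfun
  rw [hsum1, hsum2]
  ring

variable (q : ℕ) (hq : 0 < q) (m : ℤ) (r : Fin q → ℤ) (s : Fin (q ^ 2 - 1) → ℤ) (t : ℤ)

/-- The canonical set, manifestly symmetric in the coordinates of `r` and `s`. -/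
def Canon : Set (ℤ × ℤ) :=
  {p | 0 ≤ p.1 ∧ p.1 < m * ((q : ℤ) + 1) ∧ 0 ≤ p.2 ∧
    cfun q m r s p.1 + m * ((q : ℤ) + 1) * p.2 ≤ t}

lemma omega_ncard_eq (hm : 0 < m) :
    (OmegaSet q hq m r s t).ncard = (Canon q m r s t).ncard := by
  set M : ℤ := m * ((q : ℤ) + 1) with hMdef
  have hM : 0 < M := by positivity
  set f : (ℤ × (Fin (q - 1) → ℤ) × (Fin (q ^ 2 - 1) → ℤ)) → ℤ × ℤ :=
    fun p => (p.1 % M, (p.1 + r ⟨0, hq⟩) / M) with hf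
  have hbij : Set.BijOn f (OmegaSet q hq m r s t) (Canon q m r s t) := by
    refine ⟨?_, ?_, ?_⟩
    · -- MapsTo
      rintro ⟨i, j, k⟩ ⟨h0, hj, hk, hw⟩
      refine ⟨Int.emod_nonneg i hM.ne', Int.emod_lt_of_pos i hM,
        Int.ediv_nonneg h0 hM.le, ?_⟩
      show cfun q m r s (i % M) + M * ((i + r ⟨0, hq⟩) / M) ≤ t
      rw [cfun_emod, ← weight_eq q hq m hm r s i j k hj hk]
      exact hw
    · -- InjOn
      rintro ⟨i, j, k⟩ ⟨h0, hj, hk, hw⟩ ⟨i', j', k'⟩ ⟨h0', hj', hk', hw'⟩ hfe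
      simp only [hf, Prod.mk.injEq] at hfe
      obtain ⟨he, hd⟩ := hfe
      have hi : i = i' := by
        have e1 : (i + r ⟨0, hq⟩) % M = (i' + r ⟨0, hq⟩) % M := by
          rw [← emod_add_emod' i _ M M dvd_rfl, ← emod_add_emod' i' _ M M dvd_rfl, he]
        have e2 := Int.mul_ediv_add_emod (i + r ⟨0, hq⟩) M
        have e3 := Int.mul_ediv_add_emod (i' + r ⟨0, hq⟩) M
        have e4 : M * ((i + r ⟨0, hq⟩) / M) = M * ((i' + r ⟨0, hq⟩) / M) := by rw [hd]
        omega
      subst hi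
      have hjj : j = j' := by
        funext μ
        have h1 := hj μ
        have h2 := hj' μ
        have hl1 : m * ((q : ℤ) + 1) * j μ < m * ((q : ℤ) + 1) * (j' μ + 1) := by
          rw [mul_add, mul_one]; linarith [h1.2, h2.1]
        have hl2 : m * ((q : ℤ) + 1) * j' μ < m * ((q : ℤ) + 1) * (j μ + 1) := by
          rw [mul_add, mul_one]; linarith [h2.2, h1.1]
        have l1 := lt_of_mul_lt_mul_left hl1 hM.le
        have l2 := lt_of_mul_lt_mul_left hl2 hM.le
        omega
      have hkk : k = k' := by
        funext ν
        have h1 := hk ν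
        have h2 := hk' ν
        have hl1 : m * k ν < m * (k' ν + 1) := by
          rw [mul_add, mul_one]; linarith [h1.2, h2.1]
        have hl2 : m * k' ν < m * (k ν + 1) := by
          rw [mul_add, mul_one]; linarith [h2.2, h1.1]
        have l1 := lt_of_mul_lt_mul_left hl1 hm.le
        have l2 := lt_of_mul_lt_mul_left hl2 hm.le
        omega
      simp [hjj, hkk]
    · -- SurjOn
      rintro ⟨a, b⟩ ⟨ha0, haM, hb0, hct⟩
      set i : ℤ := a + M * (b - (a + r ⟨0, hq⟩) / M) with hi
      have hiM : i % M = a := by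
        rw [hi, Int.add_mul_emod_self_left, Int.emod_eq_of_lt ha0 haM]
      have hidiv : (i + r ⟨0, hq⟩) / M = b := by
        rw [show i + r ⟨0, hq⟩ = (a + r ⟨0, hq⟩) + M * (b - (a + r ⟨0, hq⟩) / M) from by
          rw [hi]; ring, Int.add_mul_ediv_left _ _ hM.ne']
        ring
      set j : Fin (q - 1) → ℤ := fun μ =>
        -((i + r ⟨μ.val + 1, by have := μ.isLt; omega⟩) / M) with hjdef
      set k : Fin (q ^ 2 - 1) → ℤ := fun ν => -((i + s ν) / m) with hkdef
      have hjc : ∀ μ : Fin (q - 1),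
          i + M * j μ + r ⟨μ.val + 1, by have := μ.isLt; omega⟩
            = (i + r ⟨μ.val + 1, by have := μ.isLt; omega⟩) % M := by
        intro μ
        have h1 : i + M * j μ + r ⟨μ.val + 1, by have := μ.isLt; omega⟩
            = (i + r ⟨μ.val + 1, by have := μ.isLt; omega⟩)
              - M * ((i + r ⟨μ.val + 1, by have := μ.isLt; omega⟩) / M) := by
          simp only [hjdef]
          ring
        rw [h1, ← Int.emod_def]
      have hkc : ∀ ν : Fin (q ^ 2 - 1),
          i + m * k ν + s ν = (i + s ν) % m := by
        intro ν
        have h1 : i + m * k ν + s ν = (i + s ν) - m * ((i + s ν) / m) := by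
          simp only [hkdef]
          ring
        rw [h1, ← Int.emod_def]
      have hmemj : ∀ μ : Fin (q - 1),
          0 ≤ i + M * j μ + r ⟨μ.val + 1, by have := μ.isLt; omega⟩ ∧
          i + M * j μ + r ⟨μ.val + 1, by have := μ.isLt; omega⟩ < M := by
        intro μ
        rw [hjc μ]
        exact ⟨Int.emod_nonneg _ hM.ne', Int.emod_lt_of_pos _ hM⟩
      have hmemk : ∀ ν : Fin (q ^ 2 - 1),
          0 ≤ i + m * k ν + s ν ∧ i + m * k ν + s ν < m := by
        intro ν
        rw [hkc ν]
        exact ⟨Int.emod_nonneg _ hm.ne', Int.emod_lt_of_pos _ hm⟩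
      refine ⟨(i, j, k), ⟨?_, hmemj, hmemk, ?_⟩, ?_⟩
      · -- 0 ≤ i + r 0
        have : i + r ⟨0, hq⟩ = (a + r ⟨0, hq⟩) % M + M * b := by
          rw [Int.emod_def]
          simp only [hi]
          ring
        rw [this]
        have := Int.emod_nonneg (a + r ⟨0, hq⟩) hM.ne'
        nlinarith
      · -- weighted sum
        show (q : ℤ) ^ 3 * i + M * (∑ μ, j μ) + m * (q : ℤ) * (∑ ν, k ν) ≤ t
        rw [weight_eq q hq m hm r s i j k hmemj hmemk, hidiv, ← cfun_emod, hiM]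
        exact hct
      · simp only [hf]
        rw [hiM, hidiv]
  rw [← hbij.image_eq, Set.ncard_image_of_injOn hbij.injOn]

end OmegaAux

/-- `#Ω_{r,s,t}` is symmetric with respect to the coordinates of `r` and with respect to
the coordinates of `s`: if `r'` is obtained from `r` by a permutation of its coordinates and
`s'` is obtained from `s` by a permutation of its coordinates, then
`#Ω_{r,s,t} = #Ω_{r',s',t}`. -/
theorem card_OmegaSet_perm (q n : ℕ) (hq : IsPrimePow q) (hn : Odd n) (hn1 : 1 < n)
    (m : ℤ) (hm : m * ((q : ℤ) + 1) = (q : ℤ) ^ n + 1)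
    (r r' : Fin q → ℤ) (s s' : Fin (q ^ 2 - 1) → ℤ) (t : ℤ)
    (σ : Equiv.Perm (Fin q)) (hr : r' = r ∘ σ)
    (τ : Equiv.Perm (Fin (q ^ 2 - 1))) (hs : s' = s ∘ τ) :
    (OmegaSet q hq.pos m r s t).ncard = (OmegaSet q hq.pos m r' s' t).ncard := by
  have hm0 : 0 < m := by
    by_contra h
    push_neg at h
    have h1 : m * ((q : ℤ) + 1) ≤ 0 :=
      mul_nonpos_of_nonpos_of_nonneg h (by positivity)
    have h2 : (0 : ℤ) < (q : ℤ) ^ n + 1 := by positivity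
    omega
  rw [OmegaAux.omega_ncard_eq q hq.pos m r s t hm0,
    OmegaAux.omega_ncard_eq q hq.pos m r' s' t hm0]
  congr 1
  subst hr hs
  unfold OmegaAux.Canon
  ext p
  simp only [Set.mem_setOf_eq, OmegaAux.cfun_perm]
end

section
/- If s = (s_1,…,s_{q²−1}) has all coordinates nonnegative and t ≥ 2g − 1, then #Ω_{0,s,t} = #Ω_{0,0,t} + q·|s|, where the first 0 denotes the zero vector in ℤ^q, the second pair (0,0) denotes both zero vectors, and |s| = Σ_{ν=1}^{q²−1} s_ν. -/
open Finset

namespace Int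

theorem add_mul_nonneg_lt_iff {d : ℤ} (hd : 0 < d) (x y : ℤ) :
    0 ≤ x + d * y ∧ x + d * y < d ↔ y = -(x / d) := by
  constructor
  · rintro ⟨h0, hd'⟩
    have h := ediv_eq_zero_of_lt h0 hd'
    rw [Int.add_mul_ediv_left _ _ hd.ne'] at h
    omega
  · rintro rfl
    rw [mul_neg, ← sub_eq_add_neg, ← Int.emod_def]
    exact ⟨Int.emod_nonneg _ hd.ne', Int.emod_lt_of_pos _ hd⟩

theorem sum_Ico_add_emod {n : ℤ} (hn : 0 < n) (s : ℤ) :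
    ∑ a ∈ Ico 0 n, (a + s) % n = ∑ a ∈ Ico 0 n, a := by
  have hinj : Set.InjOn (· % n) (Ico s (s + n) : Set ℤ) := by
    intro x hx y hy hxy
    simp only [coe_Ico, Set.mem_Ico] at hx hy
    have hdvd : n ∣ x - y := Int.ModEq.dvd hxy.symm
    have := Int.eq_zero_of_abs_lt_dvd hdvd (by rw [abs_lt]; omega)
    omega
  rw [sum_Ico_add' (· % n), zero_add, add_comm n s]
  conv_rhs => rw [← Int.image_Ico_emod s n hn.le]
  rw [sum_image hinj]

theorem sum_Ico_add_ediv_s5 {n : ℤ} (hn : 0 < n) (s : ℤ) :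
    ∑ a ∈ Ico 0 n, (a + s) / n = s := by
  refine mul_left_cancel₀ hn.ne' ?_
  have hcard : (#(Ico 0 n) : ℤ) = n := by simp [hn.le]
  calc n * ∑ a ∈ Ico 0 n, (a + s) / n = ∑ a ∈ Ico 0 n, ((a + s) - (a + s) % n) := by
        rw [mul_sum]; exact sum_congr rfl fun a _ => by rw [Int.emod_def]; ring
    _ = n * s := by
        rw [sum_sub_distrib, sum_Ico_add_emod hn, sum_add_distrib, sum_const, nsmul_eq_mul, hcard]
        ring

theorem sum_Ico_add_mul_ediv_mul {m k : ℤ} (hm : 0 < m) (hk : 0 < k) (y : ℤ) :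
    ∑ b ∈ Ico 0 k, (y + m * b) / (m * k) = y / m := by
  calc ∑ b ∈ Ico 0 k, (y + m * b) / (m * k) = ∑ b ∈ Ico 0 k, (b + y / m) / k :=
        sum_congr rfl fun b _ => by
          rw [← Int.ediv_ediv_of_nonneg hm.le, Int.add_mul_ediv_left _ _ hm.ne', add_comm]
    _ = y / m := sum_Ico_add_ediv_s5 hk _

theorem sum_Ico_mul {β : Type*} [AddCommMonoid β] {m : ℤ} (hm : 0 < m) (k : ℤ) (f : ℤ → β) :
    ∑ ρ ∈ Ico 0 (m * k), f ρ = ∑ a ∈ Ico 0 m, ∑ b ∈ Ico 0 k, f (a + m * b) := by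
  rw [← sum_product' (f := fun a b => f (a + m * b))]
  refine (sum_nbij' (fun p => p.1 + m * p.2) (fun ρ => (ρ % m, ρ / m)) ?_ ?_ ?_ ?_ ?_).symm
  · simp only [mem_product, mem_Ico, and_imp, Prod.forall]
    intro a b ha0 ham hb0 hbk
    constructor
    · positivity
    · nlinarith
  · simp only [mem_product, mem_Ico, and_imp]
    intro ρ hρ0 hρ
    refine ⟨⟨Int.emod_nonneg _ hm.ne', Int.emod_lt_of_pos _ hm⟩, Int.ediv_nonneg hρ0 hm.le, ?_⟩
    rwa [Int.ediv_lt_iff_lt_mul hm, mul_comm]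
  · simp only [mem_product, mem_Ico, and_imp, Prod.forall, Prod.mk.injEq]
    intro a b ha0 ham _ _
    rw [Int.add_mul_ediv_left _ _ hm.ne', Int.add_mul_emod_self_left, Int.emod_eq_of_lt ha0 ham,
      ediv_eq_zero_of_lt ha0 ham, zero_add]
    exact ⟨rfl, rfl⟩
  · intro ρ _
    exact Int.emod_add_mul_ediv ρ m
  · intro _ _
    rfl

theorem ncard_setOf_nonneg_le_of_add_mul {F : ℤ → ℤ} {M : ℤ} (hM : 0 < M)
    (hF : ∀ i u, F (i + M * u) = F i + M * u) (t : ℤ) :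
    {i : ℤ | 0 ≤ i ∧ F i ≤ t}.ncard = ∑ ρ ∈ Ico 0 M, ((t - F ρ) / M + 1).toNat := by
  set S := (Ico 0 M).sigma fun ρ => Icc 0 ((t - F ρ) / M)
  have hS : ∀ x : (_ : ℤ) × ℤ, x ∈ S ↔
      (0 ≤ x.1 ∧ x.1 < M) ∧ 0 ≤ x.2 ∧ F (x.1 + M * x.2) ≤ t := fun ⟨ρ, u⟩ => by
    rw [mem_sigma, mem_Ico, mem_Icc, hF, Int.le_ediv_iff_mul_le hM]
    constructor <;> rintro ⟨h1, h2, h3⟩ <;> exact ⟨h1, h2, by linarith⟩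
  have hinj : Set.InjOn (fun x : (_ : ℤ) × ℤ => x.1 + M * x.2) S := by
    rintro ⟨ρ, u⟩ hx ⟨ρ', u'⟩ hx' h
    obtain ⟨⟨hρ0, hρM⟩, -⟩ := (hS _).1 hx
    obtain ⟨⟨hρ0', hρM'⟩, -⟩ := (hS _).1 hx'
    have hρ : ρ = ρ' := by
      have := congrArg (· % M) h
      simp only [Int.add_mul_emod_self_left] at this
      rwa [Int.emod_eq_of_lt hρ0 hρM, Int.emod_eq_of_lt hρ0' hρM'] at this
    subst hρ
    have hu : u = u' := by simpa [hM.ne'] using h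
    rw [hu]
  have himage : {i : ℤ | 0 ≤ i ∧ F i ≤ t} = (fun x : (_ : ℤ) × ℤ => x.1 + M * x.2) '' S := by
    ext i
    constructor
    · rintro ⟨hi0, hit⟩
      refine ⟨⟨i % M, i / M⟩, (hS _).2 ⟨⟨Int.emod_nonneg _ hM.ne', Int.emod_lt_of_pos _ hM⟩,
        Int.ediv_nonneg hi0 hM.le, ?_⟩, Int.emod_add_mul_ediv i M⟩
      rwa [Int.emod_add_mul_ediv]
    · rintro ⟨⟨ρ, u⟩, hx, rfl⟩
      obtain ⟨⟨hρ0, -⟩, hu0, hFt⟩ := (hS _).1 hx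
      exact ⟨by positivity, hFt⟩
  rw [himage, hinj.ncard_image, Set.ncard_coe_finset, card_sigma]
  simp_rw [Int.card_Icc, sub_zero]

end Int

namespace OmegaSet

variable (q : ℕ) (m : ℤ) (s : Fin (q ^ 2 - 1) → ℤ)

def point (i : ℤ) : ℤ × (Fin (q - 1) → ℤ) × (Fin (q ^ 2 - 1) → ℤ) :=
  (i, fun _ => -(i / (m * ((q : ℤ) + 1))), fun ν => -((i + s ν) / m))

def weight (i : ℤ) : ℤ :=
  (q : ℤ) ^ 3 * i + m * ((q : ℤ) + 1) * (∑ μ, (point q m s i).2.1 μ)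
    + m * (q : ℤ) * (∑ ν, (point q m s i).2.2 ν)

theorem point_injective : Function.Injective (point q m s) :=
  fun _ _ h => congrArg Prod.fst h

variable {q m}

theorem eq_image_point (hq : 0 < q) (hm : 0 < m) (t : ℤ) :
    OmegaSet q hq m (fun _ => 0) s t = point q m s '' {i | 0 ≤ i ∧ weight q m s i ≤ t} := by
  have hM : 0 < m * ((q : ℤ) + 1) := by positivity
  ext ⟨i, j, k⟩
  simp only [OmegaSet, Set.mem_ofPred_eq, Set.mem_image, add_zero, add_right_comm i (m * _)]
  constructor
  · rintro ⟨hi, hj, hk, ht⟩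
    obtain rfl : j = (point q m s i).2.1 :=
      funext fun μ => (Int.add_mul_nonneg_lt_iff hM _ _).1 (hj μ)
    obtain rfl : k = (point q m s i).2.2 :=
      funext fun ν => (Int.add_mul_nonneg_lt_iff hm _ _).1 (hk ν)
    exact ⟨i, ⟨hi, ht⟩, rfl⟩
  · rintro ⟨i, ⟨hi, ht⟩, h⟩
    simp only [point, Prod.mk.injEq] at h
    obtain ⟨rfl, rfl, rfl⟩ := h
    exact ⟨hi, fun μ => (Int.add_mul_nonneg_lt_iff hM _ _).2 rfl,
      fun ν => (Int.add_mul_nonneg_lt_iff hm _ _).2 rfl, ht⟩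

theorem weight_add_mul (hq : 0 < q) (hm : m ≠ 0) (i u : ℤ) :
    weight q m s (i + m * ((q : ℤ) + 1) * u) = weight q m s i + m * ((q : ℤ) + 1) * u := by
  have hM : m * ((q : ℤ) + 1) ≠ 0 := mul_ne_zero hm (by positivity)
  have hj : (i + m * ((q : ℤ) + 1) * u) / (m * ((q : ℤ) + 1)) = i / (m * ((q : ℤ) + 1)) + u := by
    rw [mul_assoc, ← mul_assoc m, Int.add_mul_ediv_left _ _ hM]
  have hk : ∀ ν, (i + m * ((q : ℤ) + 1) * u + s ν) / m = (i + s ν) / m + ((q : ℤ) + 1) * u := by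
    intro ν
    rw [add_right_comm, mul_assoc, Int.add_mul_ediv_left _ _ hm]
  simp only [weight, point, hj, hk, neg_add, sum_add_distrib, sum_const, card_univ,
    Fintype.card_fin, nsmul_eq_mul, Nat.cast_sub hq, Nat.cast_sub (Nat.one_le_pow 2 q hq),
    Nat.cast_pow, Nat.cast_one]
  ring

theorem weight_add_mul_of_lt (hq : 0 < q) (hm : 0 < m) {a b : ℤ} (ha : 0 ≤ a) (ha' : a < m)
    (hb : 0 ≤ b) (hb' : b ≤ q) :
    weight q m s (a + m * b) = (q : ℤ) ^ 3 * a + m * q * b - m * q * ∑ ν, (a + s ν) / m := by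
  have hj : (a + m * b) / (m * ((q : ℤ) + 1)) = 0 :=
    Int.ediv_eq_zero_of_lt (by positivity) (by nlinarith)
  have hk : ∀ ν, (a + m * b + s ν) / m = (a + s ν) / m + b := by
    intro ν
    rw [add_right_comm, Int.add_mul_ediv_left _ _ hm.ne']
  simp only [weight, point, hj, hk, neg_zero, neg_add, sum_const_zero, sum_add_distrib,
    sum_neg_distrib, sum_const, card_univ, Fintype.card_fin, nsmul_eq_mul,
    Nat.cast_sub (Nat.one_le_pow 2 q hq), Nat.cast_pow, Nat.cast_one]
  ring

variable {s}

theorem sum_Ico_toNat_weight_add_mul (hq : 0 < q) (hm : 0 < m) (hs : ∀ ν, 0 ≤ s ν) {t : ℤ}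
    (ht : (q : ℤ) ^ 3 * (m - 1) + m * q ^ 2 ≤ t + m * ((q : ℤ) + 1)) {a : ℤ} (ha : 0 ≤ a)
    (ha' : a < m) :
    ∑ b ∈ Ico 0 ((q : ℤ) + 1),
        (((t - weight q m s (a + m * b)) / (m * ((q : ℤ) + 1)) + 1).toNat : ℤ)
      = (t - (q : ℤ) ^ 3 * a) / m + ∑ b ∈ Ico 0 ((q : ℤ) + 1), (1 - b)
        + q * ∑ ν, (a + s ν) / m := by
  have hc : 0 ≤ ∑ ν, (a + s ν) / m :=
    sum_nonneg fun ν _ => Int.ediv_nonneg (by linarith [hs ν]) hm.le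
  generalize hc_def : ∑ ν, (a + s ν) / m = c at hc ⊢
  have hM : 0 < m * ((q : ℤ) + 1) := by positivity
  have hterm : ∀ b ∈ Ico 0 ((q : ℤ) + 1),
      (((t - weight q m s (a + m * b)) / (m * ((q : ℤ) + 1)) + 1).toNat : ℤ)
        = (t - (q : ℤ) ^ 3 * a + m * q * c + m * b) / (m * ((q : ℤ) + 1)) + (1 - b) := by
    intro b hb
    obtain ⟨hb0, hbq⟩ := mem_Ico.1 hb
    rw [weight_add_mul_of_lt s hq hm ha ha' hb0 (by omega), hc_def]
    have hle : (q : ℤ) ^ 3 * a + m * q * b - m * q * c ≤ t + m * ((q : ℤ) + 1) := by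
      have : (q : ℤ) ^ 3 * a ≤ (q : ℤ) ^ 3 * (m - 1) := by gcongr; omega
      have : m * q * b ≤ m * q * q := by gcongr; omega
      have : 0 ≤ m * q * c := by positivity
      linarith
    -- `m q b = M b - m b`, which turns the sum over `b` into Hermite's identity
    have hdiv : (t - ((q : ℤ) ^ 3 * a + m * q * b - m * q * c)) / (m * ((q : ℤ) + 1))
        = (t - (q : ℤ) ^ 3 * a + m * q * c + m * b) / (m * ((q : ℤ) + 1)) - b := by
      rw [show t - ((q : ℤ) ^ 3 * a + m * q * b - m * q * c)
          = t - (q : ℤ) ^ 3 * a + m * q * c + m * b + m * ((q : ℤ) + 1) * -b by ring,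
        Int.add_mul_ediv_left _ _ hM.ne', ← sub_eq_add_neg]
    have hnonneg : -1 ≤ (t - ((q : ℤ) ^ 3 * a + m * q * b - m * q * c)) / (m * ((q : ℤ) + 1)) :=
      (Int.le_ediv_iff_mul_le hM).2 (by linarith)
    rw [Int.toNat_of_nonneg (by omega), hdiv]
    ring
  rw [sum_congr rfl hterm, sum_add_distrib,
    Int.sum_Ico_add_mul_ediv_mul hm (by positivity), add_right_comm, mul_assoc,
    Int.add_mul_ediv_left _ _ hm.ne']

theorem ncard_eq (hq : 0 < q) (hm : 0 < m) (hs : ∀ ν, 0 ≤ s ν) {t : ℤ}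
    (ht : (q : ℤ) ^ 3 * (m - 1) + m * q ^ 2 ≤ t + m * ((q : ℤ) + 1)) :
    ((OmegaSet q hq m (fun _ => 0) s t).ncard : ℤ)
      = ∑ a ∈ Ico 0 m, ((t - (q : ℤ) ^ 3 * a) / m + ∑ b ∈ Ico 0 ((q : ℤ) + 1), (1 - b))
        + q * ∑ ν, s ν := by
  have hM : 0 < m * ((q : ℤ) + 1) := by positivity
  rw [eq_image_point s hq hm, Set.ncard_image_of_injective _ (point_injective q m s),
    Int.ncard_setOf_nonneg_le_of_add_mul hM (weight_add_mul s hq hm.ne'), Nat.cast_sum,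
    Int.sum_Ico_mul hm,
    sum_congr rfl fun a ha => sum_Ico_toNat_weight_add_mul hq hm hs ht (mem_Ico.1 ha).1
      (mem_Ico.1 ha).2, sum_add_distrib, ← mul_sum, sum_comm]
  simp only [Int.sum_Ico_add_ediv_s5 hm]

end OmegaSet

theorem card_OmegaSet_s_zero_general (q n : ℕ) (hq : IsPrimePow q)
    (m : ℤ) (hm : m * ((q : ℤ) + 1) = (q : ℤ) ^ n + 1) (g : ℤ)
    (hg : 2 * g = ((q : ℤ) - 1) * ((q : ℤ) ^ (n + 1) + (q : ℤ) ^ n - (q : ℤ) ^ 2))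
    (s : Fin (q ^ 2 - 1) → ℤ) (t : ℤ)
    (hs : ∀ ν, 0 ≤ s ν) (ht : 2 * g - 1 ≤ t) :
    ((OmegaSet q hq.pos m (fun _ => 0) s t).ncard : ℤ)
      = ((OmegaSet q hq.pos m (fun _ => 0) (fun _ => 0) t).ncard : ℤ)
        + (q : ℤ) * (∑ ν, s ν) := by
  have hm0 : 0 < m := pos_of_mul_pos_left (by rw [hm]; positivity) (by positivity)
  have hmax : (q : ℤ) ^ 3 * (m - 1) + m * q ^ 2 = 2 * g - 1 + m * ((q : ℤ) + 1) := by
    linear_combination (-1 : ℤ) * hg + ((q : ℤ) ^ 2 - 1) * hm - ((q : ℤ) - 1) * pow_succ (q : ℤ) n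
  have hbound : (q : ℤ) ^ 3 * (m - 1) + m * q ^ 2 ≤ t + m * ((q : ℤ) + 1) := by linarith
  rw [OmegaSet.ncard_eq hq.pos hm0 hs hbound,
    OmegaSet.ncard_eq hq.pos hm0 (fun _ => le_rfl) hbound]
  simp

/-- If all coordinates of `s` are nonnegative and `t ≥ 2g - 1`, then
`#Ω_{0,s,t} = #Ω_{0,0,t} + q |s|`. -/
theorem card_OmegaSet_s_zero (q n : ℕ) (hq : IsPrimePow q) (hn : Odd n) (hn1 : 1 < n)
    (m : ℤ) (hm : m * ((q : ℤ) + 1) = (q : ℤ) ^ n + 1) (g : ℤ)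
    (hg : 2 * g = ((q : ℤ) - 1) * ((q : ℤ) ^ (n + 1) + (q : ℤ) ^ n - (q : ℤ) ^ 2))
    (s : Fin (q ^ 2 - 1) → ℤ) (t : ℤ)
    (hs : ∀ ν, 0 ≤ s ν) (ht : 2 * g - 1 ≤ t) :
    ((OmegaSet q hq.pos m (fun _ => 0) s t).ncard : ℤ)
      = ((OmegaSet q hq.pos m (fun _ => 0) (fun _ => 0) t).ncard : ℤ)
        + (q : ℤ) * (∑ ν, s ν) :=
  card_OmegaSet_s_zero_general q n hq m hm g hg s t hs ht
end

section
/- The two lattice point sets Θ_{r,s,t} and Ω_{r,s,t} are in bijection; in particular #Θ_{r,s,t} = #Ω_{r,s,t}. An explicit bijection sends (u, λ, γ) ∈ Θ_{r,s,t} to (i, j, k) with i = −(m(q+1) − q^{n−3})u − m(q+1)|λ| − m|γ|, j_μ = u + |λ| + λ_μ for μ = 1,…,q−1, and k_ν = (q+1)(u + |λ|) + |γ| + γ_ν for ν = 1,…,q²−1. -/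
/-- The lattice point set `Θ_{r,s,t}` associated with the GGS curve:
triples `(u, λ, γ)` with `u ≥ -t`, `0 ≤ q^(n-3) u + m γ_ν + s_ν < m` for `ν = 1,…,q²-1`,
`0 ≤ q^(n-3) u + m(q+1) λ_μ - m|γ| + r_μ < m(q+1)` for `μ = 1,…,q-1`, and
`(m(q+1) - q^(n-3)) u + m(q+1)|λ| + m|γ| ≤ r₀`. -/
def ThetaSet (q n : ℕ) (hq : 0 < q) (m : ℤ) (r : Fin q → ℤ) (s : Fin (q ^ 2 - 1) → ℤ)
    (t : ℤ) : Set (ℤ × (Fin (q - 1) → ℤ) × (Fin (q ^ 2 - 1) → ℤ)) :=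
  {p | -t ≤ p.1 ∧
    (∀ ν : Fin (q ^ 2 - 1),
      0 ≤ (q : ℤ) ^ (n - 3) * p.1 + m * p.2.2 ν + s ν ∧
      (q : ℤ) ^ (n - 3) * p.1 + m * p.2.2 ν + s ν < m) ∧
    (∀ μ : Fin (q - 1),
      0 ≤ (q : ℤ) ^ (n - 3) * p.1 + m * ((q : ℤ) + 1) * p.2.1 μ - m * (∑ ν, p.2.2 ν)
          + r ⟨μ.val + 1, by have := μ.isLt; omega⟩ ∧
      (q : ℤ) ^ (n - 3) * p.1 + m * ((q : ℤ) + 1) * p.2.1 μ - m * (∑ ν, p.2.2 ν)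
          + r ⟨μ.val + 1, by have := μ.isLt; omega⟩ < m * ((q : ℤ) + 1)) ∧
    (m * ((q : ℤ) + 1) - (q : ℤ) ^ (n - 3)) * p.1 + m * ((q : ℤ) + 1) * (∑ μ, p.2.1 μ)
      + m * (∑ ν, p.2.2 ν) ≤ r ⟨0, hq⟩}

/-- The explicit map `(u, λ, γ) ↦ (i, j, k)` with
`i = -(m(q+1) - q^(n-3)) u - m(q+1)|λ| - m|γ|`, `j_μ = u + |λ| + λ_μ`,
`k_ν = (q+1)(u + |λ|) + |γ| + γ_ν`. -/
def thetaToOmega (q n : ℕ) (m : ℤ)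
    (p : ℤ × (Fin (q - 1) → ℤ) × (Fin (q ^ 2 - 1) → ℤ)) :
    ℤ × (Fin (q - 1) → ℤ) × (Fin (q ^ 2 - 1) → ℤ) :=
  ⟨-(m * ((q : ℤ) + 1) - (q : ℤ) ^ (n - 3)) * p.1
      - m * ((q : ℤ) + 1) * (∑ μ, p.2.1 μ) - m * (∑ ν, p.2.2 ν),
    fun μ => p.1 + (∑ μ', p.2.1 μ') + p.2.1 μ,
    fun ν => ((q : ℤ) + 1) * (p.1 + (∑ μ', p.2.1 μ')) + (∑ ν', p.2.2 ν') + p.2.2 ν⟩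

private lemma sum_add_const {N : ℕ} (c : ℤ) (f : Fin N → ℤ) :
    ∑ x : Fin N, (c + f x) = (N : ℤ) * c + ∑ x, f x := by
  rw [Finset.sum_add_distrib, Finset.sum_const, Finset.card_univ, Fintype.card_fin,
    nsmul_eq_mul]

/-- Explicit inverse of `thetaToOmega`. -/
def invMap (q n : ℕ) (m : ℤ)
    (p : ℤ × (Fin (q - 1) → ℤ) × (Fin (q ^ 2 - 1) → ℤ)) :
    ℤ × (Fin (q - 1) → ℤ) × (Fin (q ^ 2 - 1) → ℤ) :=
  ⟨-((q : ℤ) ^ 3 * p.1 + m * ((q : ℤ) + 1) * (∑ μ, p.2.1 μ)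
      + m * (q : ℤ) * (∑ ν, p.2.2 ν)),
    fun μ => (q : ℤ) ^ 2 * p.1 + (q : ℤ) ^ 2 * (q : ℤ) ^ (n - 3) * (∑ μ', p.2.1 μ')
      + m * (∑ ν', p.2.2 ν') + p.2.1 μ,
    fun ν => ((q : ℤ) + 1) * p.1 + ((q : ℤ) + 1) * (q : ℤ) ^ (n - 3) * (∑ μ', p.2.1 μ')
      + (q : ℤ) * (q : ℤ) ^ (n - 3) * (∑ ν', p.2.2 ν') + p.2.2 ν⟩

/-- The explicit map `thetaToOmega` is a bijection from `Θ_{r,s,t}` onto `Ω_{r,s,t}`;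
in particular `#Θ_{r,s,t} = #Ω_{r,s,t}`. -/
theorem ThetaSet_bijOn_OmegaSet (q n : ℕ) (hq : IsPrimePow q) (hn : Odd n) (hn1 : 1 < n)
    (m : ℤ) (hm : m * ((q : ℤ) + 1) = (q : ℤ) ^ n + 1)
    (r : Fin q → ℤ) (s : Fin (q ^ 2 - 1) → ℤ) (t : ℤ) :
    Set.BijOn (thetaToOmega q n m)
        (ThetaSet q n hq.pos m r s t) (OmegaSet q hq.pos m r s t) ∧
      (ThetaSet q n hq.pos m r s t).ncard = (OmegaSet q hq.pos m r s t).ncard := by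
  have hq0 : 0 < q := hq.pos
  have hn3 : 3 ≤ n := by obtain ⟨k, hk⟩ := hn; omega
  have hpow : (q : ℤ) ^ 3 * (q : ℤ) ^ (n - 3) = (q : ℤ) ^ n := by
    rw [← pow_add]; congr 1; omega
  have hc1 : ((q - 1 : ℕ) : ℤ) = (q : ℤ) - 1 := by omega
  have h1q2 : 1 ≤ q ^ 2 := Nat.one_le_pow _ _ hq0
  have hc2 : ((q ^ 2 - 1 : ℕ) : ℤ) = (q : ℤ) ^ 2 - 1 := by
    rw [Nat.cast_sub h1q2]; push_cast; ring
  -- forward map sends Theta into Omega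
  have hfwd : ∀ p ∈ ThetaSet q n hq.pos m r s t,
      thetaToOmega q n m p ∈ OmegaSet q hq.pos m r s t := by
    rintro ⟨u, lam, gam⟩ ⟨h1, h2, h3, h4⟩
    simp only [ThetaSet, Set.mem_setOf_eq] at h2 h3 h4
    simp only [OmegaSet, thetaToOmega, Set.mem_setOf_eq]
    refine ⟨by linarith, fun μ => ?_, fun ν => ?_, ?_⟩
    · have hE : (-(m * ((q : ℤ) + 1) - (q : ℤ) ^ (n - 3)) * u
          - m * ((q : ℤ) + 1) * (∑ μ', lam μ') - m * (∑ ν', gam ν'))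
          + m * ((q : ℤ) + 1) * (u + (∑ μ', lam μ') + lam μ)
          = (q : ℤ) ^ (n - 3) * u + m * ((q : ℤ) + 1) * lam μ - m * (∑ ν', gam ν') := by
        ring
      obtain ⟨ha, hb⟩ := h3 μ
      constructor <;> linarith
    · have hE : (-(m * ((q : ℤ) + 1) - (q : ℤ) ^ (n - 3)) * u
          - m * ((q : ℤ) + 1) * (∑ μ', lam μ') - m * (∑ ν', gam ν'))
          + m * (((q : ℤ) + 1) * (u + (∑ μ', lam μ')) + (∑ ν', gam ν') + gam ν)
          = (q : ℤ) ^ (n - 3) * u + m * gam ν := by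
        ring
      obtain ⟨ha, hb⟩ := h2 ν
      constructor <;> linarith
    · rw [sum_add_const, sum_add_const, hc1, hc2]
      have hE : (q : ℤ) ^ 3 * (-(m * ((q : ℤ) + 1) - (q : ℤ) ^ (n - 3)) * u
            - m * ((q : ℤ) + 1) * (∑ μ', lam μ') - m * (∑ ν', gam ν'))
          + m * ((q : ℤ) + 1)
            * (((q : ℤ) - 1) * (u + (∑ μ', lam μ')) + ∑ x, lam x)
          + m * (q : ℤ)
            * (((q : ℤ) ^ 2 - 1) * (((q : ℤ) + 1) * (u + (∑ μ', lam μ')) + (∑ ν', gam ν'))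
              + ∑ x, gam x)
          = -u := by
        linear_combination (-u) * hm + u * hpow
      linarith
  -- backward map sends Omega into Theta
  have hbwd : ∀ p ∈ OmegaSet q hq.pos m r s t,
      invMap q n m p ∈ ThetaSet q n hq.pos m r s t := by
    rintro ⟨i, jj, kk⟩ ⟨g1, g2, g3, g4⟩
    simp only [OmegaSet, Set.mem_setOf_eq] at g1 g2 g3 g4
    simp only [ThetaSet, invMap, Set.mem_setOf_eq]
    refine ⟨by linarith, fun ν => ?_, fun μ => ?_, ?_⟩
    · have hE : (q : ℤ) ^ (n - 3)
            * (-((q : ℤ) ^ 3 * i + m * ((q : ℤ) + 1) * (∑ x, jj x)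
              + m * (q : ℤ) * (∑ x, kk x)))
          + m * (((q : ℤ) + 1) * i + ((q : ℤ) + 1) * (q : ℤ) ^ (n - 3) * (∑ x, jj x)
            + (q : ℤ) * (q : ℤ) ^ (n - 3) * (∑ x, kk x) + kk ν)
          = i + m * kk ν := by
        linear_combination i * hm - i * hpow
      obtain ⟨ha, hb⟩ := g3 ν
      constructor <;> linarith
    · rw [sum_add_const, hc2]
      have hE : (q : ℤ) ^ (n - 3)
            * (-((q : ℤ) ^ 3 * i + m * ((q : ℤ) + 1) * (∑ x, jj x)
              + m * (q : ℤ) * (∑ x, kk x)))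
          + m * ((q : ℤ) + 1) * ((q : ℤ) ^ 2 * i
            + (q : ℤ) ^ 2 * (q : ℤ) ^ (n - 3) * (∑ x, jj x) + m * (∑ x, kk x) + jj μ)
          - m * (((q : ℤ) ^ 2 - 1) * (((q : ℤ) + 1) * i
              + ((q : ℤ) + 1) * (q : ℤ) ^ (n - 3) * (∑ x, jj x)
              + (q : ℤ) * (q : ℤ) ^ (n - 3) * (∑ x, kk x)) + ∑ x, kk x)
          = i + m * ((q : ℤ) + 1) * jj μ := by
        linear_combination (i + m * (∑ x, kk x)) * hm - (i + m * (∑ x, kk x)) * hpow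
      obtain ⟨ha, hb⟩ := g2 μ
      constructor <;> linarith
    · rw [sum_add_const, sum_add_const, hc1, hc2]
      have hE : (m * ((q : ℤ) + 1) - (q : ℤ) ^ (n - 3))
            * (-((q : ℤ) ^ 3 * i + m * ((q : ℤ) + 1) * (∑ x, jj x)
              + m * (q : ℤ) * (∑ x, kk x)))
          + m * ((q : ℤ) + 1) * (((q : ℤ) - 1) * ((q : ℤ) ^ 2 * i
              + (q : ℤ) ^ 2 * (q : ℤ) ^ (n - 3) * (∑ x, jj x) + m * (∑ x, kk x)) + ∑ x, jj x)
          + m * (((q : ℤ) ^ 2 - 1) * (((q : ℤ) + 1) * i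
              + ((q : ℤ) + 1) * (q : ℤ) ^ (n - 3) * (∑ x, jj x)
              + (q : ℤ) * (q : ℤ) ^ (n - 3) * (∑ x, kk x)) + ∑ x, kk x)
          = -i := by
        linear_combination (-(i + m * ((q : ℤ) + 1) * (∑ x, jj x) + m * (∑ x, kk x))) * hm
          + (i + m * ((q : ℤ) + 1) * (∑ x, jj x) + m * (∑ x, kk x)) * hpow
      linarith
  -- invMap is a global left inverse of thetaToOmega
  have hinv1 : ∀ p, invMap q n m (thetaToOmega q n m p) = p := by
    rintro ⟨u, lam, gam⟩
    refine Prod.ext ?_ (Prod.ext (funext fun μ => ?_) (funext fun ν => ?_))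
    · simp only [invMap, thetaToOmega]
      rw [sum_add_const, sum_add_const, hc1, hc2]
      linear_combination u * hm - u * hpow
    · simp only [invMap, thetaToOmega]
      rw [sum_add_const, sum_add_const, hc1, hc2]
      linear_combination (-(u + ∑ x, lam x)) * hm + (u + ∑ x, lam x) * hpow
    · simp only [invMap, thetaToOmega]
      rw [sum_add_const, sum_add_const, hc1, hc2]
      linear_combination
        (-(((q : ℤ) + 1) * (u + ∑ x, lam x) + ∑ x, gam x)) * hm
          + (((q : ℤ) + 1) * (u + ∑ x, lam x) + ∑ x, gam x) * hpow
  -- invMap is a global right inverse of thetaToOmega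
  have hinv2 : ∀ p, thetaToOmega q n m (invMap q n m p) = p := by
    rintro ⟨i, jj, kk⟩
    refine Prod.ext ?_ (Prod.ext (funext fun μ => ?_) (funext fun ν => ?_))
    · simp only [invMap, thetaToOmega]
      rw [sum_add_const, sum_add_const, hc1, hc2]
      linear_combination (i + m * ((q : ℤ) + 1) * (∑ x, jj x) + m * (∑ x, kk x)) * hm
        - (i + m * ((q : ℤ) + 1) * (∑ x, jj x) + m * (∑ x, kk x)) * hpow
    · simp only [invMap, thetaToOmega]
      rw [sum_add_const, hc1]
      linear_combination (-(∑ x, jj x)) * hm + (∑ x, jj x) * hpow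
    · simp only [invMap, thetaToOmega]
      rw [sum_add_const, sum_add_const, hc1, hc2]
      linear_combination (-(((q : ℤ) + 1) * (∑ x, jj x) + ∑ x, kk x)) * hm
        + (((q : ℤ) + 1) * (∑ x, jj x) + ∑ x, kk x) * hpow
  have hbij : Set.BijOn (thetaToOmega q n m)
      (ThetaSet q n hq.pos m r s t) (OmegaSet q hq.pos m r s t) := by
    refine ⟨hfwd, fun p hp p' hp' h => ?_, fun p hp => ⟨invMap q n m p, hbwd p hp, hinv2 p⟩⟩
    have := congrArg (invMap q n m) h
    rwa [hinv1, hinv1] at this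
  exact ⟨hbij, by rw [← hbij.image_eq, Set.ncard_image_of_injOn hbij.injOn]⟩
end

section
/- Let n = 3 and suppose the vector s ∈ ℤ^{q²−1} has the special form s = (s_1,…,s_1, s_2,…,s_2, …, s_{q−1},…,s_{q−1}), where each value s_1,…,s_{q−1} is repeated q+1 times. Then the cardinality #Ω_{r,s,t} is symmetric with respect to r_0, r_1, …, r_{q−1}, t; that is, writing r_q := t and r'_q := t', if the sequence (r'_0,…,r'_q) is a permutation of the sequence (r_0,…,r_q), then #Ω_{(r_0,…,r_{q−1}),s,t} = #Ω_{(r'_0,…,r'_{q−1}),s,t'}. -/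
open Finset

theorem Int.nonneg_and_lt_iff_eq_neg_ediv {M : ℤ} (hM : 0 < M) (a b k : ℤ) :
    (0 ≤ a + M * k + b ∧ a + M * k + b < M) ↔ k = -((a + b) / M) := by
  have hdiv : (a + M * k + b) / M = (a + b) / M + k := by
    rw [show a + M * k + b = a + b + M * k by ring, Int.add_mul_ediv_left _ _ hM.ne']
  have hlt : a + M * k + b < M ↔ (a + M * k + b) / M < 1 := by
    rw [Int.ediv_lt_iff_lt_mul hM, one_mul]
  rw [← Int.ediv_nonneg_iff_of_pos hM, hlt, hdiv]
  omega

theorem Int.ncard_setOf_ediv_mem_Icc {M : ℤ} (hM : 0 < M) (a : ℤ) {g : ℤ → ℤ}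
    (hg : Function.Periodic g M) :
    {i : ℤ | 0 ≤ (i + a) / M ∧ (i + a) / M ≤ g i}.ncard = ∑ c ∈ Ico 0 M, (g c + 1).toNat := by
  have hshift : ∀ u c, (M * u + c + a) / M = u + (c + a) / M ∧ g (M * u + c) = g c := fun u c =>
    ⟨by rw [show M * u + c + a = c + a + M * u by ring, Int.add_mul_ediv_left _ _ hM.ne', add_comm],
      by simpa [add_comm, mul_comm] using hg.int_mul u c⟩
  have hinj : ∀ c : ℤ, Function.Injective fun u : ℤ => M * u + c := fun c u v huv =>
    mul_left_cancel₀ hM.ne' (add_right_cancel huv)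
  let piece : ℤ → Finset ℤ := fun c =>
    (Icc (-((c + a) / M)) (g c - (c + a) / M)).map ⟨fun u => M * u + c, hinj c⟩
  have hset : {i : ℤ | 0 ≤ (i + a) / M ∧ (i + a) / M ≤ g i} = ↑((Ico 0 M).biUnion piece) := by
    ext i
    simp only [piece, Set.mem_ofPred_eq, coe_biUnion, coe_Ico, Set.mem_iUnion, mem_coe, mem_map,
      mem_Icc, Function.Embedding.coeFn_mk, Set.mem_Ico, exists_prop]
    constructor
    · intro hi
      have hi' := Int.mul_ediv_add_emod i M
      obtain ⟨hdiv, hper⟩ := hshift (i / M) (i % M)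
      rw [hi'] at hdiv hper
      exact ⟨i % M, ⟨Int.emod_nonneg i hM.ne', Int.emod_lt_of_pos i hM⟩, i / M, by omega, hi'⟩
    · rintro ⟨c, -, u, hu, rfl⟩
      obtain ⟨hdiv, hper⟩ := hshift u c
      rw [hdiv, hper]
      omega
  have hdisj : (↑(Ico 0 M) : Set ℤ).PairwiseDisjoint piece := by
    intro c hc c' hc' hne
    simp only [Function.onFun, piece, disjoint_left, mem_map, Function.Embedding.coeFn_mk]
    rintro _ ⟨u, -, rfl⟩ ⟨u', -, hu'⟩
    simp only [coe_Ico, Set.mem_Ico] at hc hc'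
    apply hne
    have := congrArg (· % M) hu'
    simp only [Int.add_mul_emod_self_left, add_comm (M * _), Int.emod_eq_of_lt hc.1 hc.2,
      Int.emod_eq_of_lt hc'.1 hc'.2] at this
    exact this.symm
  rw [hset, Set.ncard_coe_finset, card_biUnion hdisj]
  refine sum_congr rfl fun c _ => ?_
  rw [card_map, Int.card_Icc]
  congr 1
  ring

theorem Fin.sum_eq_nsmul_sum_of_blocks {β : Type*} [AddCommMonoid β] {a b n : ℕ}
    (hn : a * b = n) (s : Fin n → β) (sv : Fin a → β)
    (hs : ∀ (μ : Fin a) (d : Fin b) (h : μ.val * b + d.val < n), s ⟨μ.val * b + d.val, h⟩ = sv μ) :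
    ∑ ν, s ν = b • ∑ μ, sv μ := by
  let e : Fin a × Fin b ≃ Fin n := finProdFinEquiv.trans (finCongr hn)
  have he : ∀ p : Fin a × Fin b, s (e p) = sv p.1 := fun p => by
    rw [← hs p.1 p.2 (by simpa [e, add_comm, mul_comm] using (e p).isLt)]
    congr 1
    ext
    simp [e, add_comm, mul_comm]
  rw [← e.sum_comp, Fintype.sum_prod_type]
  simp [he, smul_sum]

theorem Fin.sum_comp_snoc_eq_head_add_tail {β γ : Type*} [AddCommMonoid γ] {q : ℕ} (hq : 0 < q)
    (g : β → γ) (r : Fin q → β) (t : β) :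
    ∑ a, g ((Fin.snoc r t : Fin (q + 1) → β) a)
      = g (r ⟨0, hq⟩) + ∑ μ : Fin (q - 1), g (r ⟨μ.val + 1, by omega⟩) + g t := by
  obtain ⟨k, rfl⟩ : ∃ k, q = k + 1 := ⟨q - 1, by omega⟩
  rw [Fin.sum_univ_castSucc, Fin.sum_univ_succ]
  simp only [Fin.snoc_castSucc, Fin.snoc_last]
  rfl

def floorExcess (q : ℕ) (m : ℤ) (sv : Fin (q - 1) → ℤ) (ρ : Fin (q + 1) → ℤ) (i : ℤ) : ℤ :=
  ∑ a, (i + ρ a) / ((q : ℤ) ^ 3 + 1) + q * ∑ μ, (i + sv μ) / m - i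

section

variable {q : ℕ} {m : ℤ} (sv : Fin (q - 1) → ℤ)

theorem floorExcess_comp_perm (ρ : Fin (q + 1) → ℤ) (σ : Equiv.Perm (Fin (q + 1))) :
    floorExcess q m sv (ρ ∘ σ) = floorExcess q m sv ρ := by
  funext i
  simp only [floorExcess, Function.comp_apply]
  rw [Equiv.sum_comp σ fun a => (i + ρ a) / ((q : ℤ) ^ 3 + 1)]

theorem floorExcess_periodic (hq : 0 < q) (hm : m * ((q : ℤ) + 1) = (q : ℤ) ^ 3 + 1)
    (ρ : Fin (q + 1) → ℤ) :
    Function.Periodic (floorExcess q m sv ρ) ((q : ℤ) ^ 3 + 1) := by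
  intro i
  have hM : (0 : ℤ) < (q : ℤ) ^ 3 + 1 := by positivity
  have hm0 : 0 < m := pos_of_mul_pos_left (hm ▸ hM) (by positivity)
  have hρ : ∀ x, (i + ((q : ℤ) ^ 3 + 1) + x) / ((q : ℤ) ^ 3 + 1) = (i + x) / ((q : ℤ) ^ 3 + 1) + 1 :=
    fun x => by rw [show i + ((q : ℤ) ^ 3 + 1) + x = i + x + 1 * ((q : ℤ) ^ 3 + 1) by ring,
      Int.add_mul_ediv_right _ _ hM.ne']
  have hsv : ∀ x, (i + ((q : ℤ) ^ 3 + 1) + x) / m = (i + x) / m + ((q : ℤ) + 1) :=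
    fun x => by rw [← hm, show i + m * ((q : ℤ) + 1) + x = i + x + ((q : ℤ) + 1) * m by ring,
      Int.add_mul_ediv_right _ _ hm0.ne']
  simp only [floorExcess, hρ, hsv, sum_add_distrib, sum_const, card_univ, Fintype.card_fin,
    nsmul_eq_mul]
  push_cast [Nat.cast_sub hq]
  ring

theorem weight_le_iff_floorExcess (hq : 0 < q) (hm : m * ((q : ℤ) + 1) = (q : ℤ) ^ 3 + 1)
    (s : Fin (q ^ 2 - 1) → ℤ)
    (hs : ∀ (μ : Fin (q - 1)) (d : Fin (q + 1)) (h : μ.val * (q + 1) + d.val < q ^ 2 - 1),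
      s ⟨μ.val * (q + 1) + d.val, h⟩ = sv μ)
    (r : Fin q → ℤ) (t i : ℤ) :
    (q : ℤ) ^ 3 * i
        + ((q : ℤ) ^ 3 + 1) * ∑ μ : Fin (q - 1), -((i + r ⟨μ.val + 1, by omega⟩) / ((q : ℤ) ^ 3 + 1))
        + m * q * ∑ ν, -((i + s ν) / m) ≤ t
      ↔ (i + r ⟨0, hq⟩) / ((q : ℤ) ^ 3 + 1) ≤ floorExcess q m sv (Fin.snoc r t) i := by
  unfold floorExcess
  set M : ℤ := (q : ℤ) ^ 3 + 1 with hMdef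
  have hM : 0 < M := by positivity
  have hblocks : ∑ ν, (i + s ν) / m = (q + 1 : ℕ) • ∑ μ, (i + sv μ) / m :=
    Fin.sum_eq_nsmul_sum_of_blocks (by simpa [mul_comm] using (Nat.sq_sub_sq q 1).symm) _ _
      fun μ d h => congrArg (fun x => (i + x) / m) (hs μ d h)
  have hsnoc : ∑ a, (i + (Fin.snoc r t : Fin (q + 1) → ℤ) a) / M
      = (i + r ⟨0, hq⟩) / M + ∑ μ : Fin (q - 1), (i + r ⟨μ.val + 1, by omega⟩) / M + (i + t) / M :=
    Fin.sum_comp_snoc_eq_head_add_tail hq (fun x => (i + x) / M) r t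
  simp only [sum_neg_distrib, hblocks, hsnoc, nsmul_eq_mul]
  push_cast
  have harith : ∀ A S₁ S₂ : ℤ, (q : ℤ) ^ 3 * i + M * -S₁ + m * q * -((q + 1) * S₂) ≤ t
      ↔ A ≤ A + S₁ + (i + t) / M + q * S₂ - i := by
    intro A S₁ S₂
    have hlhs : (q : ℤ) ^ 3 * i + M * -S₁ + m * q * -((q + 1) * S₂) = (i - S₁ - q * S₂) * M - i := by
      linear_combination (-q * S₂) * hm + (-i) * hMdef
    rw [hlhs, sub_le_iff_le_add, add_comm t i, ← Int.le_ediv_iff_mul_le hM]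
    constructor <;> intro h <;> linarith
  exact harith _ _ _

theorem mem_OmegaSet_iff (hq : 0 < q) (hm : m * ((q : ℤ) + 1) = (q : ℤ) ^ 3 + 1)
    (s : Fin (q ^ 2 - 1) → ℤ)
    (hs : ∀ (μ : Fin (q - 1)) (d : Fin (q + 1)) (h : μ.val * (q + 1) + d.val < q ^ 2 - 1),
      s ⟨μ.val * (q + 1) + d.val, h⟩ = sv μ)
    (r : Fin q → ℤ) (t : ℤ) (p : ℤ × (Fin (q - 1) → ℤ) × (Fin (q ^ 2 - 1) → ℤ)) :
    p ∈ OmegaSet q hq m r s t ↔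
      p.2.1 = (fun μ => -((p.1 + r ⟨μ.val + 1, by omega⟩) / ((q : ℤ) ^ 3 + 1))) ∧
      p.2.2 = (fun ν => -((p.1 + s ν) / m)) ∧
      0 ≤ (p.1 + r ⟨0, hq⟩) / ((q : ℤ) ^ 3 + 1) ∧
      (p.1 + r ⟨0, hq⟩) / ((q : ℤ) ^ 3 + 1) ≤ floorExcess q m sv (Fin.snoc r t) p.1 := by
  obtain ⟨i, j, k⟩ := p
  have hM : (0 : ℤ) < (q : ℤ) ^ 3 + 1 := by positivity
  have hm0 : 0 < m := pos_of_mul_pos_left (hm ▸ hM) (by positivity)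
  have hj : (∀ μ : Fin (q - 1), 0 ≤ i + ((q : ℤ) ^ 3 + 1) * j μ + r ⟨μ.val + 1, by omega⟩ ∧
        i + ((q : ℤ) ^ 3 + 1) * j μ + r ⟨μ.val + 1, by omega⟩ < (q : ℤ) ^ 3 + 1)
      ↔ j = fun μ => -((i + r ⟨μ.val + 1, by omega⟩) / ((q : ℤ) ^ 3 + 1)) := by
    rw [funext_iff]
    exact forall_congr' fun μ => Int.nonneg_and_lt_iff_eq_neg_ediv hM _ _ _
  have hk : (∀ ν, 0 ≤ i + m * k ν + s ν ∧ i + m * k ν + s ν < m)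
      ↔ k = fun ν => -((i + s ν) / m) := by
    rw [funext_iff]
    exact forall_congr' fun ν => Int.nonneg_and_lt_iff_eq_neg_ediv hm0 _ _ _
  have hW := weight_le_iff_floorExcess sv hq hm s hs r t i
  simp only [OmegaSet, Set.mem_ofPred_eq, hm]
  constructor
  · rintro ⟨h0, hj', hk', hle⟩
    obtain rfl := hj.mp hj'
    obtain rfl := hk.mp hk'
    exact ⟨rfl, rfl, (Int.ediv_nonneg_iff_of_pos hM).mpr h0, hW.mp hle⟩
  · rintro ⟨rfl, rfl, h0, hle⟩
    exact ⟨(Int.ediv_nonneg_iff_of_pos hM).mp h0, hj.mpr rfl, hk.mpr rfl, hW.mpr hle⟩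

theorem ncard_OmegaSet (hq : 0 < q) (hm : m * ((q : ℤ) + 1) = (q : ℤ) ^ 3 + 1)
    (s : Fin (q ^ 2 - 1) → ℤ)
    (hs : ∀ (μ : Fin (q - 1)) (d : Fin (q + 1)) (h : μ.val * (q + 1) + d.val < q ^ 2 - 1),
      s ⟨μ.val * (q + 1) + d.val, h⟩ = sv μ)
    (r : Fin q → ℤ) (t : ℤ) :
    (OmegaSet q hq m r s t).ncard
      = ∑ c ∈ Ico 0 ((q : ℤ) ^ 3 + 1), (floorExcess q m sv (Fin.snoc r t) c + 1).toNat := by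
  have hM : (0 : ℤ) < (q : ℤ) ^ 3 + 1 := by positivity
  have himage : OmegaSet q hq m r s t = (fun i => (i, fun μ : Fin (q - 1) =>
        -((i + r ⟨μ.val + 1, by omega⟩) / ((q : ℤ) ^ 3 + 1)), fun ν => -((i + s ν) / m))) ''
      {i | 0 ≤ (i + r ⟨0, hq⟩) / ((q : ℤ) ^ 3 + 1) ∧
        (i + r ⟨0, hq⟩) / ((q : ℤ) ^ 3 + 1) ≤ floorExcess q m sv (Fin.snoc r t) i} := by
    ext p
    rw [mem_OmegaSet_iff sv hq hm s hs r t]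
    constructor
    · rintro ⟨hj, hk, hi⟩
      exact ⟨p.1, hi, Prod.ext rfl (Prod.ext hj.symm hk.symm)⟩
    · rintro ⟨i, hi, rfl⟩
      exact ⟨rfl, rfl, hi⟩
  rw [himage, Set.ncard_image_of_injective _ fun a b h => congrArg Prod.fst h,
    Int.ncard_setOf_ediv_mem_Icc hM _ (floorExcess_periodic sv hq hm _)]

end

/-- For `n = 3` and `s` of the special block form where each of the values
`sv 0, …, sv (q-2)` is repeated `q+1` times, the cardinality `#Ω_{r,s,t}` is symmetric
with respect to `r₀, r₁, …, r_(q-1), t`: writing `r_q := t` and `r'_q := t'`, if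
`(r'_0, …, r'_q)` is a permutation of `(r_0, …, r_q)`, then
`#Ω_{r,s,t} = #Ω_{r',s,t'}`. -/
theorem card_OmegaSet_symm_t (q : ℕ) (hq : IsPrimePow q)
    (m : ℤ) (hm : m * ((q : ℤ) + 1) = (q : ℤ) ^ 3 + 1)
    (sv : Fin (q - 1) → ℤ) (s : Fin (q ^ 2 - 1) → ℤ)
    (hs : ∀ (μ : Fin (q - 1)) (d : Fin (q + 1)) (h : μ.val * (q + 1) + d.val < q ^ 2 - 1),
      s ⟨μ.val * (q + 1) + d.val, h⟩ = sv μ)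
    (r r' : Fin q → ℤ) (t t' : ℤ)
    (σ : Equiv.Perm (Fin (q + 1)))
    (hperm : (Fin.snoc r' t' : Fin (q + 1) → ℤ) = (Fin.snoc r t : Fin (q + 1) → ℤ) ∘ σ) :
    (OmegaSet q hq.pos m r s t).ncard = (OmegaSet q hq.pos m r' s t').ncard := by
  rw [ncard_OmegaSet sv hq.pos hm s hs, ncard_OmegaSet sv hq.pos hm s hs, hperm,
    floorExcess_comp_perm]
end

section
/- For any (r_0,r_1,…,r_{q−1}) ∈ ℤ^q and t ∈ ℤ, one has #Ω_{(r_0,r_1,…,r_{q−1}),t} = #Ω_{(r_0−1,r_1,…,r_{q−1}),t} + 1 if and only if Σ_{μ=1}^{q−1} ⌈(r_0 − r_μ)/(m(q+1))⌉ + q(q−1)·⌈r_0/m⌉ ≤ (t + q³·r_0)/(m(q+1)), equivalently m(q+1)·(Σ_{μ=1}^{q−1} ⌈(r_0 − r_μ)/(m(q+1))⌉ + q(q−1)·⌈r_0/m⌉) ≤ t + q³·r_0. -/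
theorem Int.ceil_intCast_div_eq_iff {K : Type*} [Field K] [LinearOrder K] [IsStrictOrderedRing K]
    [FloorRing K] {a b j : ℤ} (hb : 0 < b) :
    ⌈(a : K) / b⌉ = j ↔ 0 ≤ b * j - a ∧ b * j - a < b := by
  have hb' : (0 : K) < b := by exact_mod_cast hb
  rw [Int.ceil_eq_iff, lt_div_iff₀ hb', div_le_iff₀ hb', and_comm, ← Int.cast_le (R := K),
    ← Int.cast_lt (R := K)]
  push_cast
  constructor <;> rintro ⟨h₁, h₂⟩ <;> constructor <;> linarith

namespace OmegaSet

variable {q : ℕ} {hq : 0 < q} {m : ℤ} {r : Fin q → ℤ} {s : Fin (q ^ 2 - 1) → ℤ} {t : ℤ}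
  {p : ℤ × (Fin (q - 1) → ℤ) × (Fin (q ^ 2 - 1) → ℤ)}

theorem snd_fst_eq_ceil (hp : p ∈ OmegaSet q hq m r s t) (μ : Fin (q - 1)) :
    p.2.1 μ = ⌈((-p.1 - r ⟨μ.val + 1, Nat.add_lt_of_lt_sub μ.isLt⟩ : ℤ) : ℚ)
      / ((m * ((q : ℤ) + 1) : ℤ) : ℚ)⌉ := by
  obtain ⟨h₀, h₁⟩ := hp.2.1 μ
  exact ((Int.ceil_intCast_div_eq_iff (by omega)).2 ⟨by linarith, by linarith⟩).symm

theorem snd_snd_eq_ceil (hp : p ∈ OmegaSet q hq m r s t) (ν : Fin (q ^ 2 - 1)) :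
    p.2.2 ν = ⌈((-p.1 - s ν : ℤ) : ℚ) / (m : ℚ)⌉ := by
  obtain ⟨h₀, h₁⟩ := hp.2.2.1 ν
  exact ((Int.ceil_intCast_div_eq_iff (by omega)).2 ⟨by linarith, by linarith⟩).symm

theorem injOn_fst : Set.InjOn Prod.fst (OmegaSet q hq m r s t) := by
  intro p hp p' hp' h
  refine Prod.ext h (Prod.ext (funext fun μ => ?_) (funext fun ν => ?_))
  · rw [snd_fst_eq_ceil hp, snd_fst_eq_ceil hp', h]
  · rw [snd_snd_eq_ceil hp, snd_snd_eq_ceil hp', h]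

theorem fst_le (hp : p ∈ OmegaSet q hq m r s t) :
    p.1 ≤ t + ∑ μ : Fin (q - 1), r ⟨μ.val + 1, Nat.add_lt_of_lt_sub μ.isLt⟩ + q * ∑ ν, s ν := by
  obtain ⟨-, hj, hk, hw⟩ := hp
  have hsum_j : ∑ μ : Fin (q - 1), (-p.1 - r ⟨μ.val + 1, Nat.add_lt_of_lt_sub μ.isLt⟩)
      ≤ ∑ μ, m * ((q : ℤ) + 1) * p.2.1 μ :=
    Finset.sum_le_sum fun μ _ => by linarith [(hj μ).1]
  have hsum_k : ∑ ν : Fin (q ^ 2 - 1), (-p.1 - s ν) ≤ ∑ ν, m * p.2.2 ν :=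
    Finset.sum_le_sum fun ν _ => by linarith [(hk ν).1]
  simp only [Finset.sum_sub_distrib, Finset.sum_const, Finset.card_univ, Fintype.card_fin,
    nsmul_eq_mul, ← Finset.mul_sum] at hsum_j hsum_k
  push_cast [Nat.cast_sub hq, Nat.cast_sub (Nat.one_le_pow 2 q hq)] at hsum_j hsum_k
  have hq₀ : (0 : ℤ) ≤ q := by positivity
  -- the coefficients of `i` add up to `q³ - (q - 1) - q (q² - 1) = 1`
  nlinarith [mul_le_mul_of_nonneg_left hsum_k hq₀]

theorem finite : (OmegaSet q hq m r s t).Finite := by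
  refine Set.Finite.of_finite_image ((Set.finite_Icc (-r ⟨0, hq⟩)
    (t + ∑ μ : Fin (q - 1), r ⟨μ.val + 1, Nat.add_lt_of_lt_sub μ.isLt⟩ + q * ∑ ν, s ν)).subset ?_)
    injOn_fst
  rintro _ ⟨p, hp, rfl⟩
  exact ⟨by linarith [hp.1], fst_le hp⟩

theorem mem_update_zero_iff :
    p ∈ OmegaSet q hq m (Function.update r ⟨0, hq⟩ (r ⟨0, hq⟩ - 1)) s t ↔
      p ∈ OmegaSet q hq m r s t ∧ p.1 ≠ -r ⟨0, hq⟩ := by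
  have hμ (μ : Fin (q - 1)) :
      Function.update r ⟨0, hq⟩ (r ⟨0, hq⟩ - 1) ⟨μ.val + 1, Nat.add_lt_of_lt_sub μ.isLt⟩
        = r ⟨μ.val + 1, Nat.add_lt_of_lt_sub μ.isLt⟩ :=
    Function.update_of_ne (Fin.ne_of_val_ne μ.val.succ_ne_zero) _ _
  simp only [OmegaSet, Set.mem_ofPred_eq, Function.update_self, hμ]
  constructor
  · rintro ⟨h₀, hrest⟩
    exact ⟨⟨by omega, hrest⟩, by omega⟩
  · rintro ⟨⟨h₀, hrest⟩, hne⟩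
    exact ⟨by omega, hrest⟩

theorem sdiff_update_zero :
    OmegaSet q hq m r s t \ OmegaSet q hq m (Function.update r ⟨0, hq⟩ (r ⟨0, hq⟩ - 1)) s t
      = OmegaSet q hq m r s t ∩ {p | p.1 = -r ⟨0, hq⟩} := by
  ext p
  simp only [Set.mem_sdiff, mem_update_zero_iff, Set.mem_inter_iff, Set.mem_ofPred_eq]
  tauto

theorem subsingleton_inter_fst_eq (i : ℤ) :
    (OmegaSet q hq m r s t ∩ {p | p.1 = i}).Subsingleton :=
  fun _ hp _ hp' => injOn_fst hp.1 hp'.1 (hp.2.trans hp'.2.symm)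

theorem inter_fst_eq_neg_nonempty_iff (hm : 0 < m) :
    (OmegaSet q hq m r s t ∩ {p | p.1 = -r ⟨0, hq⟩}).Nonempty ↔
      m * ((q : ℤ) + 1) * ∑ μ : Fin (q - 1),
          ⌈((r ⟨0, hq⟩ - r ⟨μ.val + 1, Nat.add_lt_of_lt_sub μ.isLt⟩ : ℤ) : ℚ)
            / ((m * ((q : ℤ) + 1) : ℤ) : ℚ)⌉
        + m * q * ∑ ν, ⌈((r ⟨0, hq⟩ - s ν : ℤ) : ℚ) / (m : ℚ)⌉ ≤ t + q ^ 3 * r ⟨0, hq⟩ := by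
  constructor
  · rintro ⟨p, hp, hp₁ : p.1 = _⟩
    have hw := hp.2.2.2
    simp only [snd_fst_eq_ceil hp, snd_snd_eq_ceil hp, hp₁, neg_neg] at hw
    linarith
  · intro hw
    have hM : 0 < m * ((q : ℤ) + 1) := by positivity
    refine ⟨(-r ⟨0, hq⟩,
      fun μ => ⌈((r ⟨0, hq⟩ - r ⟨μ.val + 1, Nat.add_lt_of_lt_sub μ.isLt⟩ : ℤ) : ℚ)
        / ((m * ((q : ℤ) + 1) : ℤ) : ℚ)⌉,
      fun ν => ⌈((r ⟨0, hq⟩ - s ν : ℤ) : ℚ) / (m : ℚ)⌉),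
      ⟨by simp, fun μ => ?_, fun ν => ?_, by dsimp only; linarith⟩, rfl⟩
    · obtain ⟨h₀, h₁⟩ := (Int.ceil_intCast_div_eq_iff (K := ℚ)
        (a := r ⟨0, hq⟩ - r ⟨μ.val + 1, Nat.add_lt_of_lt_sub μ.isLt⟩) hM).1 rfl
      constructor <;> dsimp only <;> linarith
    · obtain ⟨h₀, h₁⟩ := (Int.ceil_intCast_div_eq_iff (K := ℚ) (a := r ⟨0, hq⟩ - s ν) hm).1 rfl
      constructor <;> dsimp only <;> linarith

theorem ncard_eq_ncard_update_zero_add_one_iff (hm : 0 < m) :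
    (OmegaSet q hq m r s t).ncard
        = (OmegaSet q hq m (Function.update r ⟨0, hq⟩ (r ⟨0, hq⟩ - 1)) s t).ncard + 1 ↔
      m * ((q : ℤ) + 1) * ∑ μ : Fin (q - 1),
          ⌈((r ⟨0, hq⟩ - r ⟨μ.val + 1, Nat.add_lt_of_lt_sub μ.isLt⟩ : ℤ) : ℚ)
            / ((m * ((q : ℤ) + 1) : ℤ) : ℚ)⌉
        + m * q * ∑ ν, ⌈((r ⟨0, hq⟩ - s ν : ℤ) : ℚ) / (m : ℚ)⌉ ≤ t + q ^ 3 * r ⟨0, hq⟩ := by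
  have hsubset : OmegaSet q hq m (Function.update r ⟨0, hq⟩ (r ⟨0, hq⟩ - 1)) s t
      ⊆ OmegaSet q hq m r s t := fun _ hp => (mem_update_zero_iff.1 hp).1
  rw [← Set.ncard_sdiff_add_ncard_of_subset hsubset finite, sdiff_update_zero, add_comm,
    add_left_cancel_iff, ← inter_fst_eq_neg_nonempty_iff hm]
  have hsub : (OmegaSet q hq m r s t ∩ {p | p.1 = -r ⟨0, hq⟩}).Subsingleton :=
    subsingleton_inter_fst_eq _
  obtain h | ⟨p, h⟩ := hsub.eq_empty_or_singleton <;> rw [h] <;> simp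

end OmegaSet

/-- `#Ω_{(r₀,…,r_(q-1)),t} = #Ω_{(r₀-1,r₁,…,r_(q-1)),t} + 1` iff
`m(q+1)·(Σ_μ ⌈(r₀ - r_μ)/(m(q+1))⌉ + q(q-1)⌈r₀/m⌉) ≤ t + q³ r₀`. -/
theorem card_OmegaSet_sub_one_r (q n : ℕ) (hq : IsPrimePow q)
    (m : ℤ) (hm : m * ((q : ℤ) + 1) = (q : ℤ) ^ n + 1)
    (r : Fin q → ℤ) (t : ℤ) :
    (OmegaSet q hq.pos m r (fun _ => 0) t).ncard
        = (OmegaSet q hq.pos m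
            (Function.update r ⟨0, hq.pos⟩ (r ⟨0, hq.pos⟩ - 1)) (fun _ => 0) t).ncard + 1 ↔
      m * ((q : ℤ) + 1) *
          ((∑ μ : Fin (q - 1),
              ⌈((r ⟨0, hq.pos⟩ - r ⟨μ.val + 1, by have := μ.isLt; omega⟩ : ℤ) : ℚ)
                / ((m * ((q : ℤ) + 1) : ℤ) : ℚ)⌉)
            + (q : ℤ) * ((q : ℤ) - 1) * ⌈((r ⟨0, hq.pos⟩ : ℤ) : ℚ) / ((m : ℤ) : ℚ)⌉)
        ≤ t + (q : ℤ) ^ 3 * r ⟨0, hq.pos⟩ := by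
  have hM : 0 < m * ((q : ℤ) + 1) := by rw [hm]; positivity
  have hm₀ : 0 < m := pos_of_mul_pos_left hM (by positivity)
  rw [OmegaSet.ncard_eq_ncard_update_zero_add_one_iff hm₀]
  have hk : ∑ _ν : Fin (q ^ 2 - 1), ⌈((r ⟨0, hq.pos⟩ - 0 : ℤ) : ℚ) / (m : ℚ)⌉
      = ((q : ℤ) ^ 2 - 1) * ⌈((r ⟨0, hq.pos⟩ : ℤ) : ℚ) / (m : ℚ)⌉ := by
    simp [Nat.cast_sub (Nat.one_le_pow 2 q hq.pos)]
  rw [hk]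
  apply iff_of_eq
  congr 1
  ring
end

section
/- Let S be the additive submonoid of the natural numbers generated by q³, mq and m(q+1). Then the largest gap of S is (q−1)(q^n+1)(q+1) − q³; that is, (q−1)(q^n+1)(q+1) − q³ does not belong to S, and every integer strictly greater than (q−1)(q^n+1)(q+1) − q³ belongs to S. Moreover (q−1)(q^n+1)(q+1) − q³ = 2g − 1. -/
lemma mem_closure_triple {a b c x : ℕ} :
    x ∈ AddSubmonoid.closure ({a, b, c} : Set ℕ) ↔ ∃ u v w : ℕ, u*a + v*b + w*c = x := by
  have h : ({a, b, c} : Set ℕ) = {a} ∪ {b, c} := by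
    rw [Set.singleton_union]
  rw [h, AddSubmonoid.closure_union, AddSubmonoid.mem_sup]
  constructor
  · rintro ⟨y, hy, z, hz, rfl⟩
    obtain ⟨u, rfl⟩ := AddSubmonoid.mem_closure_singleton.mp hy
    obtain ⟨v, w, rfl⟩ := (AddSubmonoid.mem_closure_pair b c z).mp hz
    exact ⟨u, v, w, by simp [smul_eq_mul]; ring⟩
  · rintro ⟨u, v, w, rfl⟩
    refine ⟨u*a, AddSubmonoid.mem_closure_singleton.mpr ⟨u, by simp [smul_eq_mul]⟩,
      v*b + w*c, (AddSubmonoid.mem_closure_pair b c _).mpr ⟨v, w, by simp [smul_eq_mul]⟩, by ring⟩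

/-- The largest gap of the numerical semigroup `S = ⟨q³, mq, m(q+1)⟩` is
`(q-1)(qⁿ+1)(q+1) - q³`, which equals `2g - 1`. -/
theorem largest_gap (q n : ℕ) (hq : IsPrimePow q) (hn : Odd n) (hn1 : 1 < n)
    (m : ℕ) (hm : m * (q + 1) = q ^ n + 1)
    (g : ℤ)
    (hg : 2 * g = ((q : ℤ) - 1) * ((q : ℤ) ^ (n + 1) + (q : ℤ) ^ n - (q : ℤ) ^ 2)) :
    (q - 1) * (q ^ n + 1) * (q + 1) - q ^ 3
        ∉ AddSubmonoid.closure ({q ^ 3, m * q, m * (q + 1)} : Set ℕ) ∧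
      (∀ x : ℕ, (q - 1) * (q ^ n + 1) * (q + 1) - q ^ 3 < x →
        x ∈ AddSubmonoid.closure ({q ^ 3, m * q, m * (q + 1)} : Set ℕ)) ∧
      (((q - 1) * (q ^ n + 1) * (q + 1) - q ^ 3 : ℕ) : ℤ) = 2 * g - 1 := by
  have hq2 : 2 ≤ q := hq.two_le
  have hn3 : 3 ≤ n := by obtain ⟨k, hk⟩ := hn; omega
  have hqn3 : q ^ 3 ≤ q ^ n := Nat.pow_le_pow_right (by omega) hn3
  have hq23 : q ^ 2 * q = q ^ 3 := (pow_succ q 2).symm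
  have hq2q : q ^ 2 < q ^ 3 := Nat.pow_lt_pow_right (by omega) (by omega)
  have hqexp : q ^ n = q * q ^ (n - 1) := by
    conv_lhs => rw [show n = 1 + (n - 1) by omega, pow_add, pow_one]
  -- m > 1
  have hm1 : 1 < m := by
    rcases Nat.lt_or_ge m 2 with h | h
    · interval_cases m <;> nlinarith
    · exact h
  -- coprimality
  have copqn : Nat.Coprime q (q ^ n + 1) := by
    rw [hqexp, mul_comm]
    simp [Nat.coprime_mul_right_add_right q 1 (q ^ (n-1))]
  have copqm : Nat.Coprime q m :=
    Nat.Coprime.coprime_dvd_right ⟨q + 1, hm.symm⟩ copqn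
  have cop : Nat.Coprime (q ^ 2) m := copqm.pow_left 2
  have hfrob := frobeniusNumber_pair cop (by nlinarith) hm1
  -- the key quantity P = (q-1)(q^n+1)
  set P := (q - 1) * (q ^ n + 1) with hPdef
  have hPq2 : q ^ 2 < P := by
    calc q ^ 2 < q ^ 3 := hq2q
    _ ≤ q ^ n := hqn3
    _ < 1 * (q ^ n + 1) := by omega
    _ ≤ P := Nat.mul_le_mul_right _ (by omega)
  -- D = P - q^2
  obtain ⟨D, hD⟩ : ∃ D, q ^ 2 + D = P := ⟨P - q ^ 2, Nat.add_sub_cancel' hPq2.le⟩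
  -- q^2 * m = P + m
  have hPm : q ^ 2 * m = P + m := by
    have h1 : q - 1 + 1 = q := by omega
    have : P + m = m * ((q - 1) * (q + 1) + 1) := by rw [hPdef, ← hm]; ring
    rw [this]
    have h2 : (q - 1) * (q + 1) + 1 = q ^ 2 := by nlinarith [Nat.sub_add_cancel (by omega : 1 ≤ q)]
    rw [h2, mul_comm]
  -- the Frobenius number for the pair is D
  have hAeq : q ^ 2 * m - q ^ 2 - m = D := by
    rw [hPm, ← hD]
    generalize q ^ 2 = Q
    omega
  rw [hAeq] at hfrob
  -- value of the claimed gap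
  have hFval : P * (q + 1) - q ^ 3 = q ^ 2 + D * q + D := by
    have h : P * (q + 1) = q ^ 3 + (q ^ 2 + D * q + D) := by rw [← hD]; ring
    rw [h, Nat.add_sub_cancel_left]
  rw [hFval]
  refine ⟨?_, ?_, ?_⟩
  · -- nonmembership
    intro hmem
    rw [mem_closure_triple] at hmem
    obtain ⟨u, v, w, hxyz⟩ := hmem
    rw [hm] at hxyz
    have e1 : (u + 1) * q ^ 3 + v * (m * q) + w * (q ^ n + 1) = P * (q + 1) := by
      have h : P * (q + 1) = (q ^ 2 + D * q + D) + q ^ 3 := by rw [← hD]; ring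
      rw [h, ← hxyz]; ring
    -- w % q = q - 1
    have hw : w % q = q - 1 := by
      have e2 : (u + 1) * q ^ 3 + v * (m * q) + w * (q ^ n + 1)
          = w + ((u + 1) * q ^ 2 + v * m + w * q ^ (n - 1)) * q := by
        rw [hqexp]; ring
      have e3 : P * (q + 1) = (q - 1) + ((q - 1) * ((q + 1) * q ^ (n - 1)) + (q - 1)) * q := by
        rw [hPdef, hqexp]; ring
      have := congrArg (· % q) e1
      simp only [e2, e3, Nat.add_mul_mod_self_right] at this
      rw [this, Nat.mod_eq_of_lt (by omega)]
    have hwu : q * (w / q) + (q - 1) = w := by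
      rw [← hw]; exact Nat.div_add_mod w q
    have e5 : (u + 1) * q ^ 3 + v * (m * q) + (w / q) * (q ^ n + 1) * q = P * q := by
      have h := e1
      rw [← hwu] at h
      have h2 : P * (q + 1) = P * q + (q - 1) * (q ^ n + 1) := by rw [hPdef]; ring
      have h3 : (u + 1) * q ^ 3 + v * (m * q) + (q * (w / q) + (q - 1)) * (q ^ n + 1)
          = ((u + 1) * q ^ 3 + v * (m * q) + (w / q) * (q ^ n + 1) * q) + (q - 1) * (q ^ n + 1) := by
        ring
      rw [h2, h3] at h
      exact Nat.add_right_cancel h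
    have e6 : (u + 1) * q ^ 2 + v * m + (w / q) * (q ^ n + 1) = P := by
      apply Nat.eq_of_mul_eq_mul_right (show 0 < q by omega)
      rw [← e5]; ring
    have e7 : P = q ^ 2 + (u * q ^ 2 + (v + (w / q) * (q + 1)) * m) := by
      rw [← e6, ← hm]; ring
    have hDval : D = u * q ^ 2 + (v + (w / q) * (q + 1)) * m :=
      Nat.add_left_cancel (hD.trans e7)
    exact hfrob.1 ((AddSubmonoid.mem_closure_pair (q ^ 2) m D).mpr
      ⟨u, v + (w / q) * (q + 1), by simp [smul_eq_mul, hDval]⟩)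
  · -- every larger number is in the closure
    intro N hN
    rw [mem_closure_triple]
    obtain ⟨j, hj⟩ : ∃ j, N % q = j := ⟨_, rfl⟩
    have hjq : j < q := hj ▸ Nat.mod_lt _ (by omega)
    have hjP : j * (q ^ n + 1) ≤ P := Nat.mul_le_mul_right _ (by omega)
    have hle : j * (q ^ n + 1) + (D * q + 1) ≤ N := by
      have h1 : j * (q ^ n + 1) ≤ q ^ 2 + D := by rw [hD]; exact hjP
      have h2 : q ^ 2 + D * q + D < N := hN
      linarith
    have hdvd : q ∣ N - j * (q ^ n + 1) := by
      have h1 : j * (q ^ n + 1) ≡ N [MOD q] := by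
        have e2 : j * (q ^ n + 1) = j + j * q ^ (n - 1) * q := by rw [hqexp]; ring
        have e3 : j % q = j := Nat.mod_eq_of_lt hjq
        unfold Nat.ModEq
        rw [e2, Nat.add_mul_mod_self_right, e3]
        exact hj.symm
      exact (Nat.modEq_iff_dvd' (by omega)).mp h1
    obtain ⟨M, hM⟩ := hdvd
    have h1 : j * (q ^ n + 1) ≤ N := le_trans (Nat.le_add_right _ _) hle
    have hMval : j * (q ^ n + 1) + q * M = N := by
      rw [← hM]
      exact Nat.add_sub_cancel' h1
    have hqM : D * q + 1 ≤ q * M := by linarith [hle, hMval]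
    have hMD : D < M := by
      rcases Nat.lt_or_ge D M with h | h
      · exact h
      · exfalso
        have h2 : q * M ≤ q * D := Nat.mul_le_mul_left q h
        rw [mul_comm q D] at h2
        linarith
    have hMmem : M ∈ AddSubmonoid.closure ({q ^ 2, m} : Set ℕ) := by
      by_contra hc
      exact absurd (hfrob.2 hc) (by omega)
    obtain ⟨s, t, hst⟩ := (AddSubmonoid.mem_closure_pair (q ^ 2) m M).mp hMmem
    simp only [smul_eq_mul] at hst
    refine ⟨s, t, j, ?_⟩
    rw [hm]
    calc s * q ^ 3 + t * (m * q) + j * (q ^ n + 1)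
        = j * (q ^ n + 1) + q * (s * q ^ 2 + t * m) := by ring
      _ = N := by rw [hst]; exact hMval
  · -- equals 2g - 1
    have hDZ : (q : ℤ) ^ 2 + (D : ℤ) = ((q : ℤ) - 1) * ((q : ℤ) ^ n + 1) := by
      have h := hD
      rw [hPdef] at h
      zify [show 1 ≤ q by omega] at h
      exact_mod_cast h
    push_cast
    linear_combination ((q : ℤ) + 1) * hDZ - hg
end

section
/- Let S be the additive submonoid of the natural numbers generated by q³, mq and m(q+1). Then the number of gaps of S, i.e. the cardinality of ℕ \ S, equals g = (q−1)(q^{n+1}+q^n−q²)/2. -/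
/-!
If `N > 0` lies in a submonoid `S` of `ℕ` and `w r` is the least element of `S` congruent to
`r < N` modulo `N` (the Apéry set of `N`), then the gaps of `S` in the class of `r` are
`r, r + N, …, w r - N`, so there are `w r / N` of them. Summing over the classes gives Selmer's
formula `2 N · #gaps + N (N - 1) = 2 ∑ w`.

For `S = ⟨q³, mq, m(q+1)⟩` with `m(q+1) ≡ 1 [MOD q³]`, the relations `q · m(q+1) = (q+1) · mq`
and `q² · mq = m · q³` bring every element of `S` to the form `a q³ + b mq + c m(q+1)` with
`b < q²`, `c < q`. Modulo `q³` the last two terms are `bmq + c`, and these `q³` residues are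
distinct since `m` is prime to `q`. So the Apéry set of `q³` is `{b mq + c m(q+1)}`, whose sum is
`q³ (q² - 1) m(q+1) / 2`, and Selmer's formula gives the number of gaps.
-/

open Finset

structure IsAperyFamily {ι : Type*} (S : AddSubmonoid ℕ) (N : ℕ) (F : Finset ι) (w : ι → ℕ) :
    Prop where
  mem : ∀ i ∈ F, w i ∈ S
  injOn_mod : Set.InjOn (fun i ↦ w i % N) F
  card_eq : #F = N
  exists_le_modEq : ∀ x ∈ S, ∃ i ∈ F, w i ≤ x ∧ w i ≡ x [MOD N]

namespace IsAperyFamily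

variable {ι : Type*} {S : AddSubmonoid ℕ} {N : ℕ} {F : Finset ι} {w : ι → ℕ}

lemma pos (h : IsAperyFamily S N F w) : 0 < N := by
  obtain ⟨i, hi, -⟩ := h.exists_le_modEq 0 S.zero_mem
  exact h.card_eq ▸ card_pos.mpr ⟨i, hi⟩

lemma mapsTo_range (h : IsAperyFamily S N F w) : Set.MapsTo (fun i ↦ w i % N) F (range N) :=
  fun _ _ ↦ mem_range.mpr (Nat.mod_lt _ h.pos)

lemma exists_modEq (h : IsAperyFamily S N F w) (x : ℕ) : ∃ i ∈ F, w i ≡ x [MOD N] :=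
  surjOn_of_injOn_of_card_le _ h.mapsTo_range h.injOn_mod (by rw [card_range, h.card_eq])
    (mem_range.mpr (Nat.mod_lt x h.pos))

lemma mem_iff_le (h : IsAperyFamily S N F w) (hN : N ∈ S) {i : ι} (hi : i ∈ F) {x : ℕ}
    (hix : w i ≡ x [MOD N]) : x ∈ S ↔ w i ≤ x := by
  constructor
  · intro hx
    obtain ⟨j, hj, hjx, hjmod⟩ := h.exists_le_modEq x hx
    rwa [h.injOn_mod hi hj (hix.trans hjmod.symm)]
  · intro hle
    obtain ⟨k, hk⟩ := (Nat.modEq_iff_dvd' hle).mp hix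
    rw [← Nat.add_sub_cancel' hle, hk, mul_comm, ← smul_eq_mul]
    exact S.add_mem (h.mem i hi) (S.nsmul_mem hN k)

lemma setOf_notMem_eq (h : IsAperyFamily S N F w) (hN : N ∈ S) :
    {x | x ∉ S} = ↑(F.biUnion fun i ↦ {x ∈ range (w i) | x ≡ w i [MOD N]}) := by
  ext x
  obtain ⟨i, hi, hix⟩ := h.exists_modEq x
  simp only [Set.mem_ofPred_eq, coe_biUnion, coe_filter, mem_range, Set.mem_iUnion,
    exists_prop, h.mem_iff_le hN hi hix, not_le]
  constructor
  · exact fun hlt ↦ ⟨i, hi, hlt, hix.symm⟩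
  · rintro ⟨j, hj, hxj, hjmod⟩
    rwa [h.injOn_mod hi hj (hix.trans hjmod)]

lemma ncard_setOf_notMem (h : IsAperyFamily S N F w) (hN : N ∈ S) :
    {x | x ∉ S}.ncard = ∑ i ∈ F, w i / N := by
  rw [h.setOf_notMem_eq hN, Set.ncard_coe_finset, card_biUnion]
  · refine sum_congr rfl fun i _ ↦ ?_
    rw [← Nat.count_eq_card_filter_range, Nat.count_modEq_card _ h.pos, if_neg (lt_irrefl _),
      add_zero]
  · intro i hi j hj hij
    exact disjoint_left.mpr fun x hxi hxj ↦
      hij (h.injOn_mod hi hj ((mem_filter.mp hxi).2.symm.trans (mem_filter.mp hxj).2))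

lemma sum_mod_eq_sum_range (h : IsAperyFamily S N F w) :
    ∑ i ∈ F, w i % N = ∑ j ∈ range N, j :=
  sum_nbij _ h.mapsTo_range h.injOn_mod
    (surjOn_of_injOn_of_card_le _ h.mapsTo_range h.injOn_mod (by rw [card_range, h.card_eq]))
    fun _ _ ↦ rfl

theorem selmer_formula (h : IsAperyFamily S N F w) (hN : N ∈ S) :
    2 * N * {x | x ∉ S}.ncard + N * (N - 1) = 2 * ∑ i ∈ F, w i := by
  have hsum : ∑ i ∈ F, w i = N * ∑ i ∈ F, w i / N + ∑ i ∈ F, w i % N := by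
    rw [mul_sum, ← sum_add_distrib]
    exact sum_congr rfl fun i _ ↦ (Nat.div_add_mod _ _).symm
  rw [← sum_range_id_mul_two, h.ncard_setOf_notMem hN, ← h.sum_mod_eq_sum_range, hsum]
  ring

end IsAperyFamily

theorem AddSubmonoid.mem_closure_triple {A : Type*} [AddCommMonoid A] (a b c x : A) :
    x ∈ closure ({a, b, c} : Set A) ↔ ∃ i j k : ℕ, i • a + j • b + k • c = x := by
  rw [← Submodule.span_nat_eq_addSubmonoidClosure, Submodule.mem_toAddSubmonoid,
    Submodule.mem_span_insert]
  simp only [Submodule.mem_span_pair]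
  constructor
  · rintro ⟨i, _, ⟨j, k, rfl⟩, rfl⟩
    exact ⟨i, j, k, add_assoc _ _ _⟩
  · rintro ⟨i, j, k, rfl⟩
    exact ⟨i, _, ⟨j, k, rfl⟩, add_assoc _ _ _⟩

theorem Nat.eq_and_eq_of_mul_mul_add_modEq {q u b b' c c' : ℕ} (hu : u.Coprime q)
    (hb : b < q ^ 2) (hb' : b' < q ^ 2) (hc : c < q) (hc' : c' < q)
    (h : b * u * q + c ≡ b' * u * q + c' [MOD q ^ 3]) : b = b' ∧ c = c' := by
  have hq : q ≠ 0 := by omega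
  obtain rfl : c = c' := by
    have h' := h.of_dvd (dvd_pow_self q three_ne_zero)
    simp only [Nat.ModEq, Nat.mul_add_mod_self_right] at h'
    exact Nat.ModEq.eq_of_lt_of_lt h' hc hc'
  refine ⟨?_, rfl⟩
  have hbu : b * u * q ≡ b' * u * q [MOD q ^ 2 * q] := by
    rw [← pow_succ]; exact Nat.ModEq.add_right_cancel' c h
  exact ((Nat.ModEq.mul_right_cancel' hq hbu).cancel_right_of_coprime
    (Nat.Coprime.pow_left 2 hu.symm)).eq_of_lt_of_lt hb hb'

def aperyElement (q m : ℕ) (p : ℕ × ℕ) : ℕ := p.1 * (m * q) + p.2 * (m * (q + 1))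

lemma exists_eq_mul_add_aperyElement {q : ℕ} (hq : 0 < q) (m i j k : ℕ) :
    ∃ a b c, b < q ^ 2 ∧ c < q ∧
      i * q ^ 3 + j * (m * q) + k * (m * (q + 1)) = a * q ^ 3 + aperyElement q m (b, c) := by
  -- trade `q` copies of `m(q+1)` for `q+1` copies of `mq`, then `q²` copies of `mq` for `m` of `q³`
  refine ⟨i + m * ((j + (q + 1) * (k / q)) / q ^ 2), (j + (q + 1) * (k / q)) % q ^ 2, k % q,
    Nat.mod_lt _ (by positivity), Nat.mod_lt _ hq, ?_⟩
  have hk := Nat.div_add_mod k q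
  have hjk := Nat.div_add_mod (j + (q + 1) * (k / q)) (q ^ 2)
  simp only [aperyElement]
  zify at hk hjk ⊢
  linear_combination (-(m : ℤ) * (q + 1)) * hk + (-(m : ℤ) * q) * hjk

lemma aperyElement_modEq {q m : ℕ} (hm : m * (q + 1) ≡ 1 [MOD q ^ 3]) (p : ℕ × ℕ) :
    aperyElement q m p ≡ p.1 * m * q + p.2 [MOD q ^ 3] := by
  simpa [aperyElement, mul_assoc] using (Nat.ModEq.refl (p.1 * (m * q))).add (hm.mul_left p.2)

lemma two_mul_sum_aperyElement (q m : ℕ) :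
    2 * ∑ p ∈ range (q ^ 2) ×ˢ range q, aperyElement q m p =
      q ^ 3 * (q ^ 2 - 1) * (m * (q + 1)) := by
  simp only [aperyElement, sum_product, sum_add_distrib, sum_const, card_range, smul_eq_mul,
    ← sum_mul]
  rw [← mul_sum]
  calc _ = q * ((∑ b ∈ range (q ^ 2), b) * 2) * (m * q)
        + q ^ 2 * ((∑ c ∈ range q, c) * 2) * (m * (q + 1)) := by ring
    _ = q * (q ^ 2 * (q ^ 2 - 1)) * (m * q) + q ^ 2 * (q * (q - 1)) * (m * (q + 1)) := by
      rw [sum_range_id_mul_two, sum_range_id_mul_two]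
    _ = q ^ 3 * (q ^ 2 - 1) * (m * (q + 1)) := by
      rcases Nat.eq_zero_or_pos q with rfl | hq
      · simp
      · have hq2 : 1 ≤ q ^ 2 := Nat.one_le_pow _ _ hq
        zify [hq, hq2]
        ring

lemma isAperyFamily_closure {q m : ℕ} (hq : 0 < q) (hm : m * (q + 1) ≡ 1 [MOD q ^ 3]) :
    IsAperyFamily (AddSubmonoid.closure {q ^ 3, m * q, m * (q + 1)}) (q ^ 3)
      (range (q ^ 2) ×ˢ range q) (aperyElement q m) := by
  refine ⟨?_, ?_, by simp [pow_succ], ?_⟩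
  · rintro ⟨b, c⟩ -
    rw [aperyElement, ← smul_eq_mul, ← smul_eq_mul]
    exact add_mem (nsmul_mem (AddSubmonoid.subset_closure (by simp)) _)
      (nsmul_mem (AddSubmonoid.subset_closure (by simp)) _)
  · rintro ⟨b, c⟩ hbc ⟨b', c'⟩ hbc' h
    simp only [coe_product, coe_range, Set.mem_prod, Set.mem_Iio] at hbc hbc'
    have hu : m.Coprime q :=
      (Nat.coprime_of_mul_modEq_one _ hm).coprime_dvd_right (dvd_pow_self q three_ne_zero)
    obtain ⟨rfl, rfl⟩ := Nat.eq_and_eq_of_mul_mul_add_modEq hu hbc.1 hbc'.1 hbc.2 hbc'.2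
      ((aperyElement_modEq hm (b, c)).symm.trans (h.trans (aperyElement_modEq hm (b', c'))))
    rfl
  · intro x hx
    obtain ⟨i, j, k, rfl⟩ := (AddSubmonoid.mem_closure_triple _ _ _ x).mp hx
    obtain ⟨a, b, c, hb, hc, he⟩ := exists_eq_mul_add_aperyElement hq m i j k
    simp only [smul_eq_mul]
    rw [he]
    exact ⟨(b, c), by simp [hb, hc], le_add_self, (Nat.mul_add_mod_self_right _ _ _).symm⟩

/-- The number of gaps of the numerical semigroup `S = ⟨q³, mq, m(q+1)⟩` equals
`g = (q-1)(q^(n+1)+qⁿ-q²)/2`. -/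
theorem number_of_gaps (q n : ℕ) (hq : IsPrimePow q) (hn : Odd n) (hn1 : 1 < n)
    (m : ℕ) (hm : m * (q + 1) = q ^ n + 1)
    (g : ℤ)
    (hg : 2 * g = ((q : ℤ) - 1) * ((q : ℤ) ^ (n + 1) + (q : ℤ) ^ n - (q : ℤ) ^ 2)) :
    (({x : ℕ | x ∉ AddSubmonoid.closure ({q ^ 3, m * q, m * (q + 1)} : Set ℕ)}).ncard : ℤ)
      = g := by
  have hq0 : 0 < q := hq.pos
  have hn3 : 3 ≤ n := by obtain ⟨k, rfl⟩ := hn; omega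
  have hmod : m * (q + 1) ≡ 1 [MOD q ^ 3] := by
    simpa [hm] using (Nat.modEq_zero_iff_dvd.mpr (pow_dvd_pow q hn3)).add_right 1
  have selmer := (isAperyFamily_closure hq0 hmod).selmer_formula
    (AddSubmonoid.subset_closure (by simp))
  rw [two_mul_sum_aperyElement] at selmer
  have hq2 : 1 ≤ q ^ 2 := Nat.one_le_pow _ _ hq0
  have hq3 : 1 ≤ q ^ 3 := Nat.one_le_pow _ _ hq0
  zify [hq2, hq3] at selmer hm
  refine mul_left_cancel₀ (by positivity : (2 * q ^ 3 : ℤ) ≠ 0) ?_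
  linear_combination selmer - (q : ℤ) ^ 3 * hg + (q : ℤ) ^ 3 * ((q : ℤ) ^ 2 - 1) * hm
end
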